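/- arXiv:1412.2571 — 5 statements merged into one kernel-verified Lean document; each statement's English description precedes it below -/
import Mathlib

section
/- Let p be a prime and N ≥ 1 an integer. Then P_N^* = {x ∈ ℚ_p : x ≠ 0 and ∃y ∈ ℚ_p, y^N = x} is a subgroup of the multiplicative group ℚ_p^× of finite index. -/
/-! Write `x ∈ ℚ_[p]ˣ` as `u * p ^ v` with `u ∈ ℤ_[p]ˣ`. By Hensel's lemma applied to `X ^ N - u`,
a unit `u ≡ 1 [mod p ^ m]` is an `N`-th power as soon as `p ^ (-m) < ‖N‖ ^ 2`. Hence every `x`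
whose unit part is `≡ 1 [mod p ^ m]` and whose valuation is divisible by `N` is an `N`-th power.
These `x` form the kernel of a homomorphism to the finite group `(ℤ/p^m)ˣ × ℤ/N`, so the
`N`-th powers contain a subgroup of finite index. -/

theorem Units.mem_range_powMonoidHom_iff {M : Type*} [CommMonoid M] {N : ℕ} (hN : N ≠ 0) (x : Mˣ) :
    x ∈ (powMonoidHom N : Mˣ →* Mˣ).range ↔ ∃ y : M, y ^ N = x := by
  constructor
  · rintro ⟨y, rfl⟩
    exact ⟨y, by simp⟩
  · rintro ⟨y, hy⟩
    have hyu : IsUnit y := (isUnit_pow_iff hN).mp (hy ▸ x.isUnit)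
    exact ⟨hyu.unit, Units.ext (by simpa using hy)⟩

variable {p : ℕ} [Fact p.Prime]

namespace PadicInt

theorem exists_pow_eq_of_norm_sub_one_lt {N : ℕ} {w : ℤ_[p]} (h : ‖w - 1‖ < ‖(N : ℤ_[p])‖ ^ 2) :
    ∃ z : ℤ_[p], z ^ N = w := by
  obtain ⟨z, hz, -⟩ := hensels_lemma (p := p) (F := Polynomial.X ^ N - Polynomial.C w) (a := 1)
    (by simpa [Polynomial.derivative_X_pow, norm_sub_rev] using h)
  exact ⟨z, by simpa [sub_eq_zero] using hz⟩

theorem norm_sub_one_le_of_toZModPow_eq_one {m : ℕ} {u : ℤ_[p]} (hu : toZModPow m u = 1) :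
    ‖u - 1‖ ≤ (p : ℝ) ^ (-(m : ℤ)) := by
  rw [norm_le_pow_iff_mem_span_pow, ← ker_toZModPow, RingHom.mem_ker, map_sub, hu, map_one,
    sub_self]

end PadicInt

namespace Padic

noncomputable def unitsValuation : ℚ_[p]ˣ →* Multiplicative ℤ where
  toFun x := .ofAdd (x : ℚ_[p]).valuation
  map_one' := by simp
  map_mul' x y := by simp [valuation_mul x.ne_zero y.ne_zero, ofAdd_add]

theorem norm_mul_zpow_neg_valuation {x : ℚ_[p]} (hx : x ≠ 0) :
    ‖x * (p : ℚ_[p]) ^ (-x.valuation)‖ = 1 := by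
  have hp : (p : ℝ) ≠ 0 := by exact_mod_cast (Fact.out : p.Prime).ne_zero
  simp [norm_eq_zpow_neg_valuation hx, inv_mul_cancel₀ (zpow_ne_zero _ hp)]

noncomputable def unitPart : ℚ_[p]ˣ →* ℤ_[p]ˣ where
  toFun x := PadicInt.mkUnits (norm_mul_zpow_neg_valuation x.ne_zero)
  map_one' := Units.ext <| Subtype.ext <| by simp
  map_mul' x y := Units.ext <| Subtype.ext <| by
    have hp : (p : ℚ_[p]) ≠ 0 := by exact_mod_cast (Fact.out : p.Prime).ne_zero
    simp only [Units.val_mul, PadicInt.mkUnits_eq, PadicInt.coe_mul,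
      valuation_mul x.ne_zero y.ne_zero, neg_add, zpow_add₀ hp]
    ring

theorem unitPart_mul_zpow_valuation (x : ℚ_[p]ˣ) :
    ((unitPart x : ℤ_[p]) : ℚ_[p]) * (p : ℚ_[p]) ^ (x : ℚ_[p]).valuation = x := by
  have hp : (p : ℚ_[p]) ≠ 0 := by exact_mod_cast (Fact.out : p.Prime).ne_zero
  simp [unitPart, mul_assoc, inv_mul_cancel₀ (zpow_ne_zero _ hp)]

noncomputable def unitResidueValuationHom (N m : ℕ) :
    ℚ_[p]ˣ →* (ZMod (p ^ m))ˣ × Multiplicative (ZMod N) :=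
  ((Units.map (PadicInt.toZModPow m).toMonoidHom).comp unitPart).prod
    ((Int.castAddHom (ZMod N)).toMultiplicative.comp unitsValuation)

theorem ker_unitResidueValuationHom_le_range_powMonoidHom {N m : ℕ}
    (hm : (p : ℝ) ^ (-(m : ℤ)) < ‖(N : ℤ_[p])‖ ^ 2) :
    (unitResidueValuationHom N m).ker ≤ (powMonoidHom N : ℚ_[p]ˣ →* ℚ_[p]ˣ).range := by
  intro x hx
  obtain ⟨hu, hv⟩ := Prod.ext_iff.mp hx
  have hu : PadicInt.toZModPow m (unitPart x : ℤ_[p]) = 1 := congrArg Units.val hu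
  have hv : ((x : ℚ_[p]).valuation : ZMod N) = 0 := congrArg Multiplicative.toAdd hv
  obtain ⟨q, hq⟩ := (ZMod.intCast_zmod_eq_zero_iff_dvd _ _).mp hv
  obtain ⟨z, hz⟩ := PadicInt.exists_pow_eq_of_norm_sub_one_lt
    ((PadicInt.norm_sub_one_le_of_toZModPow_eq_one hu).trans_lt hm)
  have hN : N ≠ 0 := by
    rintro rfl
    rw [Nat.cast_zero, norm_zero, zero_pow two_ne_zero] at hm
    exact hm.not_ge (by positivity)
  refine (Units.mem_range_powMonoidHom_iff hN x).mpr ⟨z * (p : ℚ_[p]) ^ q, ?_⟩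
  rw [mul_pow, ← PadicInt.coe_pow, hz, ← zpow_natCast, ← zpow_mul, mul_comm q, ← hq,
    unitPart_mul_zpow_valuation]

end Padic

/-- For a prime `p` and an integer `N ≥ 1`, the set
`P_N^* = {x ∈ ℚ_p : x ≠ 0 ∧ ∃ y, y ^ N = x}` of nonzero `N`-th powers is (the underlying
set of) a subgroup of the multiplicative group `ℚ_p^×` of finite index. -/
theorem pow_subgroup_finiteIndex (p : ℕ) [Fact p.Prime] (N : ℕ) (hN : 1 ≤ N) :
    ∃ G : Subgroup ℚ_[p]ˣ,
      (G : Set ℚ_[p]ˣ) = {x : ℚ_[p]ˣ | ∃ y : ℚ_[p], y ^ N = (x : ℚ_[p])} ∧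
      G.FiniteIndex := by
  have hN0 : N ≠ 0 := Nat.one_le_iff_ne_zero.mp hN
  have : NeZero N := ⟨hN0⟩
  obtain ⟨m, hm⟩ := PadicInt.exists_pow_neg_lt p
    (pow_pos (norm_pos_iff.mpr (Nat.cast_ne_zero.mpr hN0)) 2 : 0 < ‖(N : ℤ_[p])‖ ^ 2)
  refine ⟨(powMonoidHom N).range, Set.ext (Units.mem_range_powMonoidHom_iff hN0), ?_⟩
  have := Subgroup.finiteIndex_ker (Padic.unitResidueValuationHom (p := p) N m)
  exact Subgroup.finiteIndex_of_le (Padic.ker_unitResidueValuationHom_le_range_powMonoidHom hm)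
end

section
/- Let p be a prime, e, N₀, M₀ ≥ 1 integers with M₀ > v_p(e). Then the map x ↦ x^e is injective on Q_{N₀,M₀}^* and its image is exactly Q_{eN₀, v_p(e)+M₀}^*. -/
/-- The set `Q_{N,M}^* = ⋃_{k ∈ ℤ} p^{kN} (1 + p^M ℤ_p)` inside `ℚ_p`. -/
def Qstar (p : ℕ) [Fact p.Prime] (N M : ℕ) : Set ℚ_[p] :=
  {x | ∃ (k : ℤ) (u : ℤ_[p]), x = (p : ℚ_[p]) ^ (k * (N : ℤ)) * (1 + (p : ℚ_[p]) ^ M * u)}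

/-!
If `‖z - 1‖ < ‖e‖` in `ℤ_p`, the linear term `e (z - 1)` dominates the binomial expansion of
`z ^ e - 1`, so `‖z ^ e - 1‖ = ‖e‖ ‖z - 1‖`. Together with Hensel's lemma for `X ^ e - c` at `1`,
this makes `z ↦ z ^ e` a bijection from the ball of radius `p ^ (-M)` around `1` onto the ball
of radius `p ^ (-(v_p(e) + M))`, as soon as `v_p(e) < M`. An element of `Q_{N,M}^*` is
`p ^ (kN)` times a unit of the first ball, and both factors are determined by the element
(its norm determines `k`), so the theorem reduces to this bijection.
-/

open Metric Set

namespace PadicInt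

variable {p : ℕ} [Fact p.Prime]

lemma norm_natCast_eq_zpow_neg_padicValNat {n : ℕ} (hn : n ≠ 0) :
    ‖(n : ℤ_[p])‖ = (p : ℝ) ^ (-(padicValNat p n : ℤ)) := by
  rw [norm_def, coe_natCast, Padic.norm_eq_zpow_neg_valuation (by exact_mod_cast hn),
    Padic.valuation_natCast]

lemma mem_closedBall_one_iff {z : ℤ_[p]} {M : ℕ} :
    z ∈ closedBall (1 : ℤ_[p]) ((p : ℝ) ^ (-(M : ℤ))) ↔ ∃ u, z = 1 + (p : ℤ_[p]) ^ M * u := by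
  rw [mem_closedBall, dist_eq_norm, norm_le_pow_iff_mem_span_pow, Ideal.mem_span_singleton]
  simp only [dvd_def, sub_eq_iff_eq_add']

lemma norm_eq_one_of_norm_sub_one_lt_one {z : ℤ_[p]} (h : ‖z - 1‖ < 1) : ‖z‖ = 1 := by
  rw [← sub_add_cancel z 1, norm_add_eq_max_of_ne (by rw [norm_one]; exact h.ne), norm_one,
    max_eq_right h.le]

lemma norm_pow_sub_one_eq {e : ℕ} {z : ℤ_[p]} (hz : ‖z - 1‖ < ‖(e : ℤ_[p])‖) :
    ‖z ^ e - 1‖ = ‖(e : ℤ_[p])‖ * ‖z - 1‖ := by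
  rcases eq_or_ne z 1 with rfl | hz1
  · simp
  set t := z - 1
  obtain ⟨s, hs⟩ : t ^ 2 ∣ (1 + t) ^ e - 1 ^ (e - 1) * t * e - 1 ^ e :=
    sq_dvd_add_pow_sub_sub t 1 e
  have hpow : z ^ e - 1 = e * t + t ^ 2 * s := by
    rw [← hs, show z = 1 + t by ring]
    ring
  have hquad : ‖t ^ 2 * s‖ < ‖(e : ℤ_[p]) * t‖ :=
    calc ‖t ^ 2 * s‖ ≤ ‖t‖ * ‖t‖ := by
          rw [norm_mul, norm_pow, sq]
          exact mul_le_of_le_one_right (by positivity) (norm_le_one s)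
      _ < ‖(e : ℤ_[p]) * t‖ := by
          rw [norm_mul]
          exact mul_lt_mul_of_pos_right hz (norm_pos_iff.2 (sub_ne_zero.2 hz1))
  rw [hpow, norm_add_eq_max_of_ne hquad.ne', max_eq_left hquad.le, norm_mul]

lemma exists_unique_pow_eq_of_norm_sub_one_lt {e : ℕ} {c : ℤ_[p]}
    (hc : ‖c - 1‖ < ‖(e : ℤ_[p])‖ ^ 2) :
    ∃ z, z ^ e = c ∧ ‖z - 1‖ < ‖(e : ℤ_[p])‖ ∧
      ∀ w, w ^ e = c → ‖w - 1‖ < ‖(e : ℤ_[p])‖ → w = z := by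
  have hF (x : ℤ_[p]) : (Polynomial.X ^ e - Polynomial.C c).aeval x = x ^ e - c := by simp
  have hF' : (Polynomial.X ^ e - Polynomial.C c).derivative.aeval (1 : ℤ_[p]) = (e : ℤ_[p]) := by
    simp [Polynomial.derivative_X_pow]
  have hnorm : ‖(Polynomial.X ^ e - Polynomial.C c).aeval (1 : ℤ_[p])‖ <
      ‖(Polynomial.X ^ e - Polynomial.C c).derivative.aeval (1 : ℤ_[p])‖ ^ 2 := by
    rwa [hF, hF', one_pow, norm_sub_rev]
  obtain ⟨z, hz, hz1, -, huniq⟩ := hensels_lemma hnorm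
  simp only [hF, hF', sub_eq_zero] at hz hz1 huniq
  exact ⟨z, hz, hz1, huniq⟩

theorem pow_bijOn_closedBall_one {e : ℕ} {r : ℝ} (hr₀ : 0 ≤ r) (hr : r < ‖(e : ℤ_[p])‖) :
    BijOn (· ^ e) (closedBall (1 : ℤ_[p]) r) (closedBall 1 (‖(e : ℤ_[p])‖ * r)) := by
  have he : 0 < ‖(e : ℤ_[p])‖ := hr₀.trans_lt hr
  have hmaps : MapsTo (· ^ e) (closedBall (1 : ℤ_[p]) r) (closedBall 1 (‖(e : ℤ_[p])‖ * r)) := by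
    intro z hz
    rw [mem_closedBall, dist_eq_norm] at hz ⊢
    rw [norm_pow_sub_one_eq (hz.trans_lt hr)]
    exact mul_le_mul_of_nonneg_left hz he.le
  have hsmall {c : ℤ_[p]} (hc : c ∈ closedBall 1 (‖(e : ℤ_[p])‖ * r)) :
      ‖c - 1‖ < ‖(e : ℤ_[p])‖ ^ 2 := by
    rw [mem_closedBall, dist_eq_norm] at hc
    exact hc.trans_lt (by rw [sq]; exact mul_lt_mul_of_pos_left hr he)
  refine ⟨hmaps, fun z hz w hw hzw => ?_, fun c hc => ?_⟩
  · obtain ⟨_, -, -, huniq⟩ := exists_unique_pow_eq_of_norm_sub_one_lt (hsmall (hmaps hz))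
    rw [mem_closedBall, dist_eq_norm] at hz hw
    exact (huniq z rfl (hz.trans_lt hr)).trans (huniq w hzw.symm (hw.trans_lt hr)).symm
  · obtain ⟨z, rfl, hz1, -⟩ := exists_unique_pow_eq_of_norm_sub_one_lt (hsmall hc)
    refine ⟨z, ?_, rfl⟩
    rw [mem_closedBall, dist_eq_norm] at hc ⊢
    rw [norm_pow_sub_one_eq hz1] at hc
    exact le_of_mul_le_mul_left hc he

end PadicInt

namespace Padic

variable {p : ℕ} [Fact p.Prime]

lemma zpow_mul_coe_pow (a : ℤ) (z : ℤ_[p]) (e : ℕ) :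
    ((p : ℚ_[p]) ^ a * z) ^ e = (p : ℚ_[p]) ^ (a * e) * ((z ^ e : ℤ_[p]) : ℚ_[p]) := by
  rw [mul_pow, zpow_mul, zpow_natCast, PadicInt.coe_pow]

lemma eq_of_zpow_mul_coe_eq {a b : ℤ} {z w : ℤ_[p]} (hz : ‖z‖ = 1) (hw : ‖w‖ = 1)
    (h : (p : ℚ_[p]) ^ a * z = (p : ℚ_[p]) ^ b * w) : a = b ∧ z = w := by
  have hp := (Fact.out : p.Prime)
  have hnorm {c : ℤ} {u : ℤ_[p]} (hu : ‖u‖ = 1) : ‖(p : ℚ_[p]) ^ c * u‖ = (p : ℝ) ^ (-c) := by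
    rw [norm_mul, norm_p_zpow, ← PadicInt.norm_def, hu, mul_one]
  have hab : a = b := by
    have := congrArg norm h
    rw [hnorm hz, hnorm hw] at this
    exact neg_injective
      (zpow_right_injective₀ (by exact_mod_cast hp.pos) (by exact_mod_cast hp.ne_one) this)
  subst hab
  exact ⟨rfl, PadicInt.ext (mul_left_cancel₀ (zpow_ne_zero _ (by exact_mod_cast hp.ne_zero)) h)⟩

end Padic

lemma mem_Qstar_iff {p : ℕ} [Fact p.Prime] {N M : ℕ} {x : ℚ_[p]} :
    x ∈ Qstar p N M ↔ ∃ k : ℤ, ∃ z ∈ closedBall (1 : ℤ_[p]) ((p : ℝ) ^ (-(M : ℤ))),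
      x = (p : ℚ_[p]) ^ (k * (N : ℤ)) * z := by
  simp only [Qstar, mem_ofPred_eq, PadicInt.mem_closedBall_one_iff]
  constructor
  · rintro ⟨k, u, rfl⟩
    exact ⟨k, _, ⟨u, rfl⟩, by push_cast; rfl⟩
  · rintro ⟨k, _, ⟨u, rfl⟩, rfl⟩
    exact ⟨k, u, by push_cast; rfl⟩

theorem pow_injOn_Qstar_and_image_general (p : ℕ) [Fact p.Prime] (e N₀ M₀ : ℕ)
    (he : 1 ≤ e) (hvM : padicValNat p e < M₀) :
    Set.InjOn (fun x : ℚ_[p] => x ^ e) (Qstar p N₀ M₀) ∧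
    (fun x : ℚ_[p] => x ^ e) '' Qstar p N₀ M₀ = Qstar p (e * N₀) (padicValNat p e + M₀) := by
  have hp : 1 < (p : ℝ) := by exact_mod_cast (Fact.out : p.Prime).one_lt
  have hnorm_e := PadicInt.norm_natCast_eq_zpow_neg_padicValNat (p := p) (by omega : e ≠ 0)
  have hbij : BijOn (· ^ e) (closedBall (1 : ℤ_[p]) ((p : ℝ) ^ (-(M₀ : ℤ))))
      (closedBall 1 ((p : ℝ) ^ (-((padicValNat p e + M₀ : ℕ) : ℤ)))) := by
    have := PadicInt.pow_bijOn_closedBall_one (e := e) (r := (p : ℝ) ^ (-(M₀ : ℤ)))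
      (zpow_nonneg (by positivity) _) (by rw [hnorm_e]; exact zpow_lt_zpow_right₀ hp (by omega))
    rwa [hnorm_e, ← zpow_add₀ (by positivity), ← neg_add, ← Nat.cast_add] at this
  have hunit {z : ℤ_[p]} (hz : z ∈ closedBall 1 ((p : ℝ) ^ (-(M₀ : ℤ)))) : ‖z ^ e‖ = 1 := by
    rw [norm_pow, PadicInt.norm_eq_one_of_norm_sub_one_lt_one, one_pow]
    rw [mem_closedBall, dist_eq_norm] at hz
    exact hz.trans_lt (zpow_lt_one_of_neg₀ hp (by omega : -(M₀ : ℤ) < 0))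
  have hexp (k : ℤ) : k * (N₀ : ℤ) * e = k * ((e * N₀ : ℕ) : ℤ) := by push_cast; ring
  refine ⟨?_, ?_⟩
  · rintro x hx y hy hxy
    obtain ⟨k, z, hz, rfl⟩ := mem_Qstar_iff.1 hx
    obtain ⟨l, w, hw, rfl⟩ := mem_Qstar_iff.1 hy
    simp only [Padic.zpow_mul_coe_pow] at hxy
    obtain ⟨hkl, hzw⟩ := Padic.eq_of_zpow_mul_coe_eq (hunit hz) (hunit hw) hxy
    rw [mul_left_inj' (by omega : (e : ℤ) ≠ 0)] at hkl
    rw [hkl, hbij.injOn hz hw hzw]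
  · ext y
    simp only [mem_image, mem_Qstar_iff]
    constructor
    · rintro ⟨_, ⟨k, z, hz, rfl⟩, rfl⟩
      exact ⟨k, z ^ e, hbij.mapsTo hz, by rw [Padic.zpow_mul_coe_pow, hexp]⟩
    · rintro ⟨k, c, hc, rfl⟩
      obtain ⟨z, hz, rfl⟩ := hbij.surjOn hc
      exact ⟨_, ⟨k, z, hz, rfl⟩, by rw [Padic.zpow_mul_coe_pow, hexp]⟩

/-- Let `p` be a prime and `e, N₀, M₀ ≥ 1` integers with `M₀ > v_p(e)`.
Then `x ↦ x ^ e` is injective on `Q_{N₀,M₀}^*` and its image is exactly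
`Q_{e·N₀, v_p(e) + M₀}^*`. -/
theorem pow_injOn_Qstar_and_image (p : ℕ) [Fact p.Prime] (e N₀ M₀ : ℕ)
    (he : 1 ≤ e) (hN : 1 ≤ N₀) (hM : 1 ≤ M₀) (hvM : padicValNat p e < M₀) :
    Set.InjOn (fun x : ℚ_[p] => x ^ e) (Qstar p N₀ M₀) ∧
    (fun x : ℚ_[p] => x ^ e) '' Qstar p N₀ M₀ = Qstar p (e * N₀) (padicValNat p e + M₀) :=
  pow_injOn_Qstar_and_image_general p e N₀ M₀ he hvM
end

section
/- Let p be an odd prime. For all x, y ∈ ℚ_p one has |y|_p ≤ |x|_p if and only if there exists z ∈ ℚ_p with z² = x² + p·y². -/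
/-!
Since `p` is odd, Hensel's lemma makes every `1 + u` with `‖u‖ < 1` a square, so
`x ^ 2 + p * y ^ 2 = x ^ 2 * (1 + p * y ^ 2 / x ^ 2)` is a square when `‖y‖ ≤ ‖x‖`.
Conversely, if `‖x‖ < ‖y‖` then, norms being discrete, `‖x ^ 2‖ < ‖p * y ^ 2‖`, so
`x ^ 2 + p * y ^ 2` has the valuation `1 + 2 * y.valuation` of `p * y ^ 2`, which is odd,
whereas squares have even valuation.
-/

open Polynomial

namespace PadicInt

variable {p : ℕ} [Fact p.Prime]

theorem norm_two_eq_one (hp : p ≠ 2) : ‖(2 : ℤ_[p])‖ = 1 := by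
  simpa using (norm_natCast_eq_one_iff (p := p) (n := 2)).2
    ((Nat.coprime_primes Fact.out Nat.prime_two).2 hp)

theorem isSquare_one_add (hp : p ≠ 2) {u : ℤ_[p]} (hu : ‖u‖ < 1) : IsSquare (1 + u) := by
  set F : ℤ_[p][X] := X ^ 2 - C (1 + u)
  have hF : ‖F.aeval (1 : ℤ_[p])‖ < ‖F.derivative.aeval (1 : ℤ_[p])‖ ^ 2 := by
    simp [F, one_add_one_eq_two, norm_two_eq_one hp, hu]
  obtain ⟨z, hz, -⟩ := hensels_lemma hF
  exact ⟨z, (sub_eq_zero.1 (by simpa [F, sq] using hz)).symm⟩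

end PadicInt

namespace Padic

variable {p : ℕ} [Fact p.Prime]

theorem isSquare_one_add (hp : p ≠ 2) {u : ℚ_[p]} (hu : ‖u‖ < 1) : IsSquare (1 + u) := by
  obtain ⟨r, hr⟩ := PadicInt.isSquare_one_add hp (u := (⟨u, hu.le⟩ : ℤ_[p])) hu
  exact ⟨r, by exact_mod_cast congrArg ((↑) : ℤ_[p] → ℚ_[p]) hr⟩

theorem isSquare_sq_add_of_norm_lt (hp : p ≠ 2) {a w : ℚ_[p]} (h : ‖w‖ < ‖a ^ 2‖) :
    IsSquare (a ^ 2 + w) := by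
  have ha : a ^ 2 ≠ 0 := norm_pos_iff.1 ((norm_nonneg w).trans_lt h)
  have hu : ‖w / a ^ 2‖ < 1 := by rwa [norm_div, div_lt_one (norm_pos_iff.2 ha)]
  rw [show a ^ 2 + w = a ^ 2 * (1 + w / a ^ 2) by rw [mul_add, mul_one, mul_div_cancel₀ _ ha]]
  exact (IsSquare.sq a).mul (isSquare_one_add hp hu)

theorem valuation_eq_of_norm_eq {a b : ℚ_[p]} (h : ‖a‖ = ‖b‖) : a.valuation = b.valuation := by
  rcases eq_or_ne a 0 with rfl | ha
  · rw [norm_zero, eq_comm, norm_eq_zero] at h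
    rw [h]
  have hb : b ≠ 0 := norm_ne_zero_iff.1 (h ▸ norm_ne_zero_iff.2 ha)
  have hp1 : (1 : ℝ) < p := mod_cast (Fact.out : p.Prime).one_lt
  rwa [norm_eq_zpow_neg_valuation ha, norm_eq_zpow_neg_valuation hb,
    zpow_right_inj₀ (by positivity) hp1.ne', neg_inj] at h

theorem norm_le_inv_mul_of_norm_lt {a b : ℚ_[p]} (h : ‖a‖ < ‖b‖) : ‖a‖ ≤ (p : ℝ)⁻¹ * ‖b‖ := by
  have hb : b ≠ 0 := norm_pos_iff.1 ((norm_nonneg a).trans_lt h)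
  rw [norm_eq_zpow_neg_valuation hb, norm_lt_pow_iff_norm_le_pow_sub_one] at h
  rw [norm_eq_zpow_neg_valuation hb]
  rwa [zpow_sub_one₀ (by exact_mod_cast (Fact.out : p.Prime).ne_zero), mul_comm] at h

theorem norm_p_mul_lt_of_norm_le {a b : ℚ_[p]} (hb : b ≠ 0) (h : ‖a‖ ≤ ‖b‖) :
    ‖(p : ℚ_[p]) * a‖ < ‖b‖ := by
  have hp1 : (1 : ℝ) < p := mod_cast (Fact.out : p.Prime).one_lt
  rw [norm_mul, norm_p]
  calc (p : ℝ)⁻¹ * ‖a‖ ≤ (p : ℝ)⁻¹ * ‖b‖ := by gcongr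
    _ < ‖b‖ := mul_lt_of_lt_one_left (norm_pos_iff.2 hb) (inv_lt_one_of_one_lt₀ hp1)

theorem norm_sq_lt_norm_p_mul_sq {a b : ℚ_[p]} (h : ‖a‖ < ‖b‖) :
    ‖a ^ 2‖ < ‖(p : ℚ_[p]) * b ^ 2‖ := by
  have hb : b ≠ 0 := norm_pos_iff.1 ((norm_nonneg a).trans_lt h)
  have hp0 : (p : ℚ_[p]) ≠ 0 := mod_cast (Fact.out : p.Prime).ne_zero
  have ha : ‖a‖ ≤ (p : ℝ)⁻¹ * ‖b‖ := norm_le_inv_mul_of_norm_lt h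
  calc ‖a ^ 2‖ = ‖a‖ ^ 2 := norm_pow a 2
    _ ≤ ((p : ℝ)⁻¹ * ‖b‖) ^ 2 := by gcongr
    _ = ‖(p : ℚ_[p]) * (p * b ^ 2)‖ := by rw [norm_mul, norm_mul, norm_p, norm_pow]; ring
    _ < ‖(p : ℚ_[p]) * b ^ 2‖ :=
      norm_p_mul_lt_of_norm_le (mul_ne_zero hp0 (pow_ne_zero 2 hb)) le_rfl

end Padic

/-- For an odd prime `p` and all `x y ∈ ℚ_p`,
`|y|_p ≤ |x|_p` iff `x² + p·y²` is a square in `ℚ_p`. -/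
theorem norm_le_iff_isSquare_add_p_mul_sq (p : ℕ) [Fact p.Prime] (hp : p ≠ 2)
    (x y : ℚ_[p]) :
    ‖y‖ ≤ ‖x‖ ↔ ∃ z : ℚ_[p], z ^ 2 = x ^ 2 + p * y ^ 2 := by
  constructor
  · intro h
    rcases eq_or_ne x 0 with rfl | hx
    · obtain rfl : y = 0 := norm_le_zero_iff.1 (by simpa using h)
      exact ⟨0, by simp⟩
    have hlt : ‖(p : ℚ_[p]) * y ^ 2‖ < ‖x ^ 2‖ :=
      Padic.norm_p_mul_lt_of_norm_le (pow_ne_zero 2 hx) (by simpa only [norm_pow] using by gcongr)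
    obtain ⟨z, hz⟩ := Padic.isSquare_sq_add_of_norm_lt hp hlt
    exact ⟨z, by rw [hz, sq]⟩
  · rintro ⟨z, hz⟩
    by_contra! hlt
    have hy : y ≠ 0 := norm_pos_iff.1 ((norm_nonneg x).trans_lt hlt)
    have hsq := Padic.norm_sq_lt_norm_p_mul_sq hlt
    have hv := Padic.valuation_eq_of_norm_eq (a := z ^ 2) (b := (p : ℚ_[p]) * y ^ 2) <| by
      rw [hz, Padic.add_eq_max_of_ne hsq.ne, max_eq_right hsq.le]
    rw [Padic.valuation_pow, Padic.valuation_mul (mod_cast (Fact.out : p.Prime).ne_zero)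
      (pow_ne_zero 2 hy), Padic.valuation_p, Padic.valuation_pow] at hv
    omega
end

section
/- Let ℒ be a first-order language containing the language of rings and let ℚ_p carry an ℒ-structure extending its ring structure. Assume Denef's cell decomposition holds in (ℚ_p, ℒ): for every m ≥ 0 and every finite family 𝒜 of definable subsets of ℚ_p^{m+1} there exist N ≥ 1 and a finite family of presented cells mod P_N^* refining 𝒜. Then (ℚ_p, ℒ) has definable Skolem functions: for all m, n ≥ 1 and every definable S ⊆ ℚ_p^{m+n}, the coordinate projection of S onto ℚ_p^m admits a definable section over its image. -/
/-!
Setting: `(ℚ_p, ℒ)` is an expansion of the field `ℚ_p` of `p`-adic numbers, i.e. `ℒ` is a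
first-order language containing the language of rings (witnessed by a language morphism
`φ : Language.ring →ᴸ L` which is an expansion on `ℚ_p`), and `ℚ_p` carries an
`ℒ`-structure extending its ring structure.  "Definable" means `ℒ`-definable with
parameters from `ℚ_p`; "semi-algebraic" means definable in the language of rings with
parameters from `ℚ_p`.  Tuples in `ℚ_p^β` are modelled as functions `β → ℚ_p`.
-/

open FirstOrder Language

noncomputable section

namespace PadicMin

variable (p : ℕ) [Fact p.Prime]

/-- The canonical ring-language structure on `ℚ_p`. -/
instance : Language.ring.Structure ℚ_[p] :=
  (FirstOrder.Ring.compatibleRingOfRing ℚ_[p]).toStructure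

/-- `S ⊆ ℚ_p^β` is ℒ-definable with parameters from `ℚ_p`. -/
def LDef (L : Language) [L.Structure ℚ_[p] ] {β : Type} (S : Set (β → ℚ_[p])) : Prop :=
  Set.Definable (Set.univ : Set ℚ_[p]) L S

/-- `S ⊆ ℚ_p^β` is semi-algebraic: definable with parameters in the language of rings. -/
def SemiAlg {β : Type} (S : Set (β → ℚ_[p])) : Prop :=
  Set.Definable (Set.univ : Set ℚ_[p]) Language.ring S

/-- The function `f` is ℒ-definable (with parameters) on the set `X`: its graph over `X`
is a definable subset of `ℚ_p^β × ℚ_p`. -/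
def DefFunOn (L : Language) [L.Structure ℚ_[p] ] {β : Type} (X : Set (β → ℚ_[p]))
    (f : (β → ℚ_[p]) → ℚ_[p]) : Prop :=
  LDef p L {z : β ⊕ Unit → ℚ_[p] | (z ∘ Sum.inl) ∈ X ∧ z (Sum.inr ()) = f (z ∘ Sum.inl)}

/-- A global ℒ-definable function `ℚ_p^β → ℚ_p`. -/
def DefFun (L : Language) [L.Structure ℚ_[p] ] {β : Type}
    (f : (β → ℚ_[p]) → ℚ_[p]) : Prop :=
  DefFunOn p L Set.univ f

/-- The set `P_N = {x ∈ ℚ_p : ∃ y, y^N = x}` of `N`-th powers. -/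
def PN (N : ℕ) : Set ℚ_[p] := {x | ∃ y : ℚ_[p], y ^ N = x}

/-- The set `P_N^* = P_N \ {0}` of nonzero `N`-th powers. -/
def PNstar (N : ℕ) : Set ℚ_[p] := {x | x ≠ 0 ∧ ∃ y : ℚ_[p], y ^ N = x}

/-- The set `Q_{N,M}^* = ⋃_{k ∈ ℤ} p^{kN}(1 + p^M ℤ_p)`, a subgroup of `ℚ_p^×`. -/
def Qstar (N M : ℕ) : Set ℚ_[p] :=
  {x | ∃ (k : ℤ) (u : ℤ_[p]), x = (p : ℚ_[p]) ^ (k * (N : ℤ)) * (1 + (p : ℚ_[p]) ^ M * u)}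

/-- A *basic* function on `ℚ_p^{β ⊕ Unit}` (the `Unit` coordinate being the last
variable): a polynomial in the last variable whose coefficients are global definable
functions of the remaining variables. -/
def IsBasicFn (L : Language) [L.Structure ℚ_[p] ] {β : Type}
    (f : (β ⊕ Unit → ℚ_[p]) → ℚ_[p]) : Prop :=
  ∃ (d : ℕ) (a : ℕ → (β → ℚ_[p]) → ℚ_[p]),
    (∀ j ≤ d, DefFun p L (a j)) ∧
    ∀ z, f z = ∑ j ∈ Finset.range (d + 1), a j (z ∘ Sum.inl) * z (Sum.inr ()) ^ j

/-- A *basic set*: a set of the form `{z : f z ∈ P_N}` with `f` basic and `N ≥ 1`. -/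
def IsBasicSet (L : Language) [L.Structure ℚ_[p] ] {β : Type}
    (S : Set (β ⊕ Unit → ℚ_[p])) : Prop :=
  ∃ (N : ℕ) (f : (β ⊕ Unit → ℚ_[p]) → ℚ_[p]),
    1 ≤ N ∧ IsBasicFn p L f ∧ S = {z | f z ∈ PN p N}

/-- Finite boolean combinations of sets satisfying the predicate `B`. -/
inductive BoolComb {α : Type*} (B : Set α → Prop) : Set α → Prop
  | of {s : Set α} : B s → BoolComb B s
  | compl {s : Set α} : BoolComb B s → BoolComb B sᶜ
  | union {s t : Set α} : BoolComb B s → BoolComb B t → BoolComb B (s ∪ t)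
  | inter {s t : Set α} : BoolComb B s → BoolComb B t → BoolComb B (s ∩ t)

/-- `(ℚ_p, ℒ)` is *p-optimal*: every definable subset of `ℚ_p^{m+1}` (for every `m`)
is a finite boolean combination of basic sets. -/
def POptimal (L : Language) [L.Structure ℚ_[p] ] : Prop :=
  ∀ (m : ℕ) (S : Set (Fin m ⊕ Unit → ℚ_[p])),
    LDef p L S → BoolComb (IsBasicSet p L) S

/-- A boundary datum of a presented cell: either the constant `0`, the constant `∞`,
or a function with values in `ℚ_p`. -/
inductive CBound (K : Type*) (β : Type*) where
  | zero : CBound K β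
  | inf : CBound K β
  | fn (f : (β → K) → K) : CBound K β

open scoped ENNReal NNReal

/-- The "norm value" of a boundary datum at a point, in `ℝ≥0∞` (`⊤` for `∞`). -/
def CBound.val {p : ℕ} [Fact p.Prime] {β : Type} :
    CBound ℚ_[p] β → (β → ℚ_[p]) → ℝ≥0∞
  | .zero, _ => 0
  | .inf, _ => ⊤
  | .fn f, x => (‖f x‖₊ : ℝ≥0∞)

/-- Well-formedness of a boundary datum over a base `X`: in the function case, the
function must be definable on `X` with nonzero values there. -/
def CBound.WF {p : ℕ} [Fact p.Prime] (L : Language) [L.Structure ℚ_[p] ] {β : Type}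
    (X : Set (β → ℚ_[p])) : CBound ℚ_[p] β → Prop
  | .zero => True
  | .inf => True
  | .fn f => (∀ x ∈ X, f x ≠ 0) ∧ DefFunOn p L X f

/-- A *presented cell mod `G`* in `ℚ_p^{m+1}`, where `G ⊆ ℚ_p` is (the underlying set of)
a subgroup of `ℚ_p^×` of finite index: a nonempty definable base `X ⊆ ℚ_p^m`, a definable
center `c : X → ℚ_p`, boundaries `ν, μ` (each either a definable function `X → ℚ_p \ {0}`,
the constant `0`, or the constant `∞`), and `λ ∈ ℚ_p`, such that the fiber
`{t : |ν x| ≤ |t − c x| ≤ |μ x| ∧ t − c x ∈ λG}` over every `x ∈ X` is nonempty.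
It is of type 0 if `λ = 0` and of type 1 otherwise. -/
structure PCell (L : Language) [L.Structure ℚ_[p] ] (m : ℕ) (G : Set ℚ_[p]) where
  base : Set (Fin m → ℚ_[p])
  base_nonempty : base.Nonempty
  base_def : LDef p L base
  c : (Fin m → ℚ_[p]) → ℚ_[p]
  c_def : DefFunOn p L base c
  ν : CBound ℚ_[p] (Fin m)
  μ : CBound ℚ_[p] (Fin m)
  ν_wf : ν.WF L base
  μ_wf : μ.WF L base
  lam : ℚ_[p]
  fiber_nonempty : ∀ x ∈ base, ∃ t : ℚ_[p],
    ν.val x ≤ (‖t - c x‖₊ : ℝ≥0∞) ∧ (‖t - c x‖₊ : ℝ≥0∞) ≤ μ.val x ∧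
    ∃ g ∈ G, t - c x = lam * g

/-- The underlying cellular set of a presented cell, inside `ℚ_p^{m+1}`
(indexed by `Fin m ⊕ Unit`, the `Unit` coordinate being the last variable `t`). -/
def PCell.toSet {p : ℕ} [Fact p.Prime] {L : Language} [L.Structure ℚ_[p] ] {m : ℕ}
    {G : Set ℚ_[p]} (H : PCell p L m G) : Set (Fin m ⊕ Unit → ℚ_[p]) :=
  {z | (z ∘ Sum.inl) ∈ H.base ∧
    H.ν.val (z ∘ Sum.inl) ≤ (‖z (Sum.inr ()) - H.c (z ∘ Sum.inl)‖₊ : ℝ≥0∞) ∧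
    (‖z (Sum.inr ()) - H.c (z ∘ Sum.inl)‖₊ : ℝ≥0∞) ≤ H.μ.val (z ∘ Sum.inl) ∧
    ∃ g ∈ G, z (Sum.inr ()) - H.c (z ∘ Sum.inl) = H.lam * g}

/-- `(ℚ_p, ℒ)` has *definable Skolem functions*: for all `m, n`, every definable
`S ⊆ ℚ_p^{m+n}` admits a definable section of the coordinate projection onto `ℚ_p^m`
over the image of `S`. -/
def HasDefSkolem (L : Language) [L.Structure ℚ_[p] ] : Prop :=
  ∀ (m n : ℕ) (S : Set (Fin m ⊕ Fin n → ℚ_[p])), LDef p L S →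
    ∃ σ : (Fin m → ℚ_[p]) → (Fin n → ℚ_[p]),
      LDef p L {z : Fin m ⊕ Fin n → ℚ_[p] |
        (∃ y : Fin n → ℚ_[p], Sum.elim (z ∘ Sum.inl) y ∈ S) ∧
        (z ∘ Sum.inr) = σ (z ∘ Sum.inl)} ∧
      ∀ x : Fin m → ℚ_[p], (∃ y : Fin n → ℚ_[p], Sum.elim x y ∈ S) →
        Sum.elim x (σ x) ∈ S

/-- An ℒ-structure `M` is *p-minimal* (relative to the inclusion of languages
`φ : ring →ᴸ ℒ`): every ℒ-definable (with parameters from `M`) subset of `M` is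
definable with parameters in the language of rings, via the reduct structure. -/
def PMinimalStruct (L : Language) (φ : Language.ring →ᴸ L) (M : Type)
    [L.Structure M] : Prop :=
  ∀ s : Set (Fin 1 → M), Set.Definable (Set.univ : Set M) L s →
    letI : Language.ring.Structure M := φ.reduct M
    Set.Definable (Set.univ : Set M) Language.ring s

/-- `(ℚ_p, ℒ)` itself is *p-minimal*: every ℒ-definable subset of `ℚ_p` is
semi-algebraic. -/
def PMinimalQp (L : Language) [L.Structure ℚ_[p] ] : Prop :=
  ∀ s : Set (Fin 1 → ℚ_[p]), LDef p L s → SemiAlg p s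

/-- `(ℚ_p, ℒ)` is *strongly p-minimal*: every ℒ-structure elementarily equivalent to it
is p-minimal. -/
def StronglyPMinimal (L : Language) [L.Structure ℚ_[p] ] (φ : Language.ring →ᴸ L) :
    Prop :=
  ∀ (M : Type) [L.Structure M], (ℚ_[p] ≅[L] M) → PMinimalStruct L φ M

/-- `(ℚ_p, ℒ)` satisfies the *Extreme Value Property*: every continuous definable
function from a closed and bounded definable set `X ⊆ ℚ_p` to `|ℚ_p| \ {0}` attains a
minimum value.  (A function `g : X → |ℚ_p|` is definable when the set
`{(x, y) : x ∈ X ∧ |y| = g x}` is definable.) -/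
def EVP (L : Language) [L.Structure ℚ_[p] ] : Prop :=
  ∀ (X : Set ℚ_[p]) (g : ℚ_[p] → ℝ),
    Set.Definable₁ (Set.univ : Set ℚ_[p]) L X →
    IsClosed X → Bornology.IsBounded X → X.Nonempty →
    ContinuousOn g X →
    (∀ x ∈ X, ∃ y : ℚ_[p], y ≠ 0 ∧ ‖y‖ = g x) →
    LDef p L {z : Fin 2 → ℚ_[p] | z 0 ∈ X ∧ ‖z 1‖ = g (z 0)} →
    ∃ x₀ ∈ X, ∀ x ∈ X, g x₀ ≤ g x

/-- The image of `A ⊆ ℚ_p^m` under some injective coordinate projection to `ℚ_p^d`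
has nonempty interior (for the `p`-adic topology). -/
def ProjNonemptyInterior (m d : ℕ) (A : Set (Fin m → ℚ_[p])) : Prop :=
  ∃ ι : Fin d → Fin m, Function.Injective ι ∧
    (interior ((fun x : Fin m → ℚ_[p] => x ∘ ι) '' A)).Nonempty

/-- `A ⊆ ℚ_p^m` has dimension `dA` (in the sense of Haskell–Macpherson): `dA` is the
largest `d` with `1 ≤ d ≤ m` such that the image of `A` under some coordinate projection
`ℚ_p^m → ℚ_p^d` has nonempty interior, and `0` if there is no such `d`. -/
def HasDim (m : ℕ) (A : Set (Fin m → ℚ_[p])) (dA : ℕ) : Prop :=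
  (dA = 0 ∧ ∀ d', 1 ≤ d' → ¬ ProjNonemptyInterior p m d' A) ∨
  (1 ≤ dA ∧ ProjNonemptyInterior p m dA A ∧
    ∀ d', dA < d' → ¬ ProjNonemptyInterior p m d' A)

/-- A function on `ℚ_p^{β ⊕ γ}` which is polynomial in the `γ`-block of (the last)
variables, with global definable functions of the `β`-block as coefficients.
For `#γ = d` this is a *`d`-basic* function. -/
def IsPolyBasicFn (L : Language) [L.Structure ℚ_[p] ] {β γ : Type} [Fintype γ]
    (f : (β ⊕ γ → ℚ_[p]) → ℚ_[p]) : Prop :=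
  ∃ (s : Finset (γ →₀ ℕ)) (a : (γ →₀ ℕ) → (β → ℚ_[p]) → ℚ_[p]),
    (∀ e ∈ s, DefFun p L (a e)) ∧
    ∀ z, f z = ∑ e ∈ s, a e (z ∘ Sum.inl) * ∏ i : γ, z (Sum.inr i) ^ (e i)

/-- A `d`-basic set (`d = #γ`): `{z : f z ∈ P_N}` with `f` `d`-basic and `N ≥ 1`. -/
def IsPolyBasicSet (L : Language) [L.Structure ℚ_[p] ] {β γ : Type} [Fintype γ]
    (S : Set (β ⊕ γ → ℚ_[p])) : Prop :=
  ∃ (N : ℕ) (f : (β ⊕ γ → ℚ_[p]) → ℚ_[p]),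
    1 ≤ N ∧ IsPolyBasicFn p L f ∧ S = {z | f z ∈ PN p N}

end PadicMin

/-!
Skolem functions in several variables are composed from Skolem functions in one variable, so it
suffices to pick, definably in `x`, a point of every nonempty fibre `S_x ⊆ ℚ_p`. Decompose `S` into
finitely many cells mod `P_N^*`; it is enough to pick a point definably in each cell over its base,
and then to use the first cell whose base contains `x`.

In a cell with center `c` and coset `λP_N^*`, the norms of the points `t - c` form the discrete
set `|λ| p^{NZ}`; if the upper boundary is `f`, the point of largest norm `≤ |f x|` therefore lies
above the lower boundary as soon as any point of the fibre does. It is found definably because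
`P_N^*` has finite index in `ℚ_p^×` (Hensel's lemma): `f x ∈ r P_N^*` for one of finitely many `r`,
and then `t = c x + λ p^{Nq} f x / r` with `q` depending only on `r`.
-/

section

variable {M : Type*} {L : Language} [L.Structure M] {A : Set M} {α α' β β' γ : Type*}

namespace Set

theorem definableMap_comp_right (f : α → β) : A.DefinableMap L fun v : β → M => v ∘ f :=
  fun _ => DefinableFun.proj L

theorem DefinableMap.definable_setOf_comp_inr_eq [Finite α] [Finite β]
    {σ : (α → M) → β → M} (hσ : A.DefinableMap L σ) :
    A.Definable L {z : α ⊕ β → M | z ∘ Sum.inr = σ (z ∘ Sum.inl)} := by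
  simp only [funext_iff, ofPred_forall]
  exact definable_iInter_of_finite fun i =>
    (DefinableFun.proj L).ofPred_eq ((hσ i).comp (definableMap_comp_right Sum.inl))

theorem Definable₁.definable_setOf_mem {s : Set M} (hs : A.Definable₁ L s)
    {f : (α → M) → M} (hf : A.DefinableFun L f) : A.Definable L {x | f x ∈ s} :=
  hs.preimage_map (F := fun x => ![f x]) (Fin.forall_fin_one.2 hf)

theorem exists_definableFun_glue {ι : Type*} (t : Finset ι) {P : ι → Set (α → M)}
    {f : ι → (α → M) → M} {f₀ : (α → M) → M} (hf₀ : A.DefinableFun L f₀)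
    (hP : ∀ i ∈ t, A.Definable L (P i)) (hf : ∀ i ∈ t, A.DefinableFun L (f i)) :
    ∃ g, A.DefinableFun L g ∧ ∀ x, ∀ i ∈ t, x ∈ P i → ∃ j ∈ t, x ∈ P j ∧ g x = f j x := by
  classical
  induction t using Finset.induction_on with
  | empty => exact ⟨f₀, hf₀, by simp⟩
  | insert i t _ ih =>
    obtain ⟨g, hg, hgP⟩ := ih (fun j hj => hP j (Finset.mem_insert_of_mem hj))
      (fun j hj => hf j (Finset.mem_insert_of_mem hj))
    have hi := t.mem_insert_self i
    refine ⟨fun x => if x ∈ P i then f i x else g x, DefinableFun.ite (hP i hi) (hf i hi) hg,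
      fun x j hj hx => ?_⟩
    by_cases hxi : x ∈ P i
    · exact ⟨i, hi, hxi, if_pos hxi⟩
    · have hjt : j ∈ t := (Finset.mem_insert.1 hj).resolve_left (by rintro rfl; exact hxi hx)
      obtain ⟨k, hk, hxk, hgk⟩ := hgP x j hjt hx
      exact ⟨k, Finset.mem_insert_of_mem hk, hxk, (if_neg hxi).trans hgk⟩

end Set

namespace FirstOrder.Language

open Set

variable (L A α β) in
def HasDefinableSkolemFunctions : Prop :=
  ∀ S : Set (α ⊕ β → M), A.Definable L S →
    ∃ σ : (α → M) → β → M, A.DefinableMap L σ ∧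
      ∀ x, (∃ y, Sum.elim x y ∈ S) → Sum.elim x (σ x) ∈ S

namespace HasDefinableSkolemFunctions

theorem of_isEmpty [IsEmpty β] : HasDefinableSkolemFunctions L A α β := by
  intro S _
  refine ⟨fun _ => isEmptyElim, isEmptyElim, ?_⟩
  rintro x ⟨y, hy⟩
  rwa [Subsingleton.elim y isEmptyElim] at hy

theorem of_equiv [Finite α'] (e : α ≃ α') (f : β ≃ β')
    (h : HasDefinableSkolemFunctions L A α' β') : HasDefinableSkolemFunctions L A α β := by
  intro S hS
  obtain ⟨σ, hσ, hσS⟩ := h _ (hS.preimage_comp (Sum.map e f))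
  refine ⟨fun x => σ (x ∘ e.symm) ∘ f, fun i => (hσ (f i)).comp (definableMap_comp_right _), ?_⟩
  rintro x ⟨y, hy⟩
  have := hσS (x ∘ e.symm) ⟨y ∘ f.symm, by simpa [Sum.elim_comp_map, Function.comp_assoc]⟩
  simpa [Sum.elim_comp_map, Function.comp_assoc] using this

theorem sum [Finite α] [Finite β] [Finite γ] (h₁ : HasDefinableSkolemFunctions L A α β)
    (h₂ : HasDefinableSkolemFunctions L A (α ⊕ β) γ) :
    HasDefinableSkolemFunctions L A α (β ⊕ γ) := by
  intro S hS
  set T : Set ((α ⊕ β) ⊕ γ → M) := (fun u => u ∘ (Equiv.sumAssoc α β γ).symm) ⁻¹' S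
  have hT : ∀ x y z, Sum.elim (Sum.elim x y) z ∈ T ↔ Sum.elim x (Sum.elim y z) ∈ S := by
    intro x y z
    have : Sum.elim (Sum.elim x y) z ∘ (Equiv.sumAssoc α β γ).symm = Sum.elim x (Sum.elim y z) := by
      ext (a | b | c) <;> rfl
    rw [mem_preimage, this]
  obtain ⟨τ, hτ, hτT⟩ := h₂ T (hS.preimage_comp _)
  obtain ⟨σ, hσ, hσS⟩ := h₁ _ (hS.preimage_comp (Equiv.sumAssoc α β γ).symm).exists_of_finite
  have hxσ : A.DefinableMap L fun x => Sum.elim x (σ x) := by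
    rintro (a | b)
    · exact DefinableFun.proj L
    · exact hσ b
  refine ⟨fun x => Sum.elim (σ x) (τ (Sum.elim x (σ x))), ?_, ?_⟩
  · rintro (b | c)
    · exact hσ b
    · exact (hτ c).comp hxσ
  rintro x ⟨y, hy⟩
  obtain ⟨z, hz⟩ :=
    hσS x ⟨y ∘ Sum.inl, y ∘ Sum.inr, (hT _ _ _).2 (by rwa [Sum.elim_comp_inl_inr])⟩
  exact (hT _ _ _).1 (hτT _ ⟨z, hz⟩)

theorem fin (h : ∀ m, HasDefinableSkolemFunctions L A (Fin m) Unit) (m n : ℕ) :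
    HasDefinableSkolemFunctions L A (Fin m) (Fin n) := by
  induction n with
  | zero => exact of_isEmpty
  | succ n ih =>
    exact (ih.sum ((h (m + n)).of_equiv finSumFinEquiv (.refl _))).of_equiv (.refl _)
      (finSumFinEquiv.symm.trans (.sumCongr (.refl _) finOneEquiv))

end HasDefinableSkolemFunctions

end FirstOrder.Language

end

namespace PadicMin

variable (p : ℕ) [Fact p.Prime]

open scoped ENNReal NNReal

section

variable {p} {N : ℕ}

open Set

theorem one_lt_p : (1 : ℝ) < p := Nat.one_lt_cast.2 (Fact.out : p.Prime).one_lt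

theorem p_pos : (0 : ℝ) < p := zero_lt_one.trans one_lt_p

theorem p_ne_zero : (p : ℚ_[p]) ≠ 0 := Nat.cast_ne_zero.2 (Fact.out : p.Prime).ne_zero

open Polynomial in
theorem exists_mul_pow_eq_of_norm_sub_lt {u n : ℤ_[p]} (hn : ‖n‖ = 1)
    (h : ‖u - n‖ < ‖(N : ℤ_[p])‖ ^ 2) : ∃ z : ℤ_[p], n * z ^ N = u := by
  have hF : ‖(C n * X ^ N - C u).aeval (1 : ℤ_[p])‖ <
      ‖(C n * X ^ N - C u).derivative.aeval (1 : ℤ_[p])‖ ^ 2 := by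
    simpa [norm_sub_rev, hn, derivative_X_pow] using h
  obtain ⟨z, hz, -⟩ := hensels_lemma hF
  exact ⟨z, by simpa [sub_eq_zero] using hz⟩

theorem exists_natCast_mul_pow_eq (hN : N ≠ 0) :
    ∃ M : ℕ, ∀ u : ℤ_[p], ‖u‖ = 1 → ∃ n < p ^ M, ∃ z : ℤ_[p], (n : ℤ_[p]) * z ^ N = u := by
  have hN' : 0 < ‖(N : ℤ_[p])‖ ^ 2 := by
    have : (N : ℤ_[p]) ≠ 0 := Nat.cast_ne_zero.2 hN
    positivity
  obtain ⟨M, hM⟩ := exists_pow_lt_of_lt_one hN' (inv_lt_one_of_one_lt₀ (one_lt_p (p := p)))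
  refine ⟨M, fun u hu => ⟨u.appr M, u.appr_lt M, ?_⟩⟩
  have happr : ‖u - u.appr M‖ < ‖(N : ℤ_[p])‖ ^ 2 := by
    refine lt_of_le_of_lt ?_ hM
    rw [inv_pow, ← zpow_natCast, ← zpow_neg]
    exact (PadicInt.norm_le_pow_iff_mem_span_pow _ M).2 (PadicInt.appr_spec M u)
  have hn : ‖((u.appr M : ℕ) : ℤ_[p])‖ = 1 := by
    have hlt : ‖((u.appr M : ℕ) : ℤ_[p]) - u‖ < ‖u‖ := by
      rw [norm_sub_rev, hu]
      exact happr.trans_le (pow_le_one₀ (norm_nonneg _) (PadicInt.norm_le_one _))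
    rw [← hu, ← sub_add_cancel ((u.appr M : ℕ) : ℤ_[p]) u,
      IsUltrametricDist.norm_add_eq_max_of_norm_ne_norm hlt.ne, max_eq_right hlt.le]
  exact exists_mul_pow_eq_of_norm_sub_lt hn happr

theorem exists_finset_div_mem_PNstar (hN : N ≠ 0) :
    ∃ R : Finset ℚ_[p], 0 ∉ R ∧ ∀ w ≠ 0, ∃ r ∈ R, w / r ∈ PNstar p N := by
  classical
  obtain ⟨M, hM⟩ := exists_natCast_mul_pow_eq (p := p) hN
  refine ⟨((Finset.range N ×ˢ Finset.range (p ^ M)).image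
    fun sn => (p : ℚ_[p]) ^ sn.1 * (sn.2 : ℚ_[p])).erase 0, Finset.notMem_erase 0 _, fun w hw => ?_⟩
  set v := w.valuation
  have hu : ‖w * (p : ℚ_[p]) ^ (-v)‖ = 1 := by
    rw [norm_mul, Padic.norm_p_zpow, neg_neg, Padic.norm_eq_zpow_neg_valuation hw,
      ← zpow_add₀ p_pos.ne', neg_add_cancel, zpow_zero]
  obtain ⟨n, hn, z, hz⟩ := hM ⟨_, hu.le⟩ hu
  have hv : v = N * (v / N) + ((v % N).toNat : ℕ) := by
    rw [Int.toNat_of_nonneg (Int.emod_nonneg _ (by exact_mod_cast hN))]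
    exact (Int.mul_ediv_add_emod v N).symm
  have hw' : w = (p : ℚ_[p]) ^ (v % N).toNat * n * ((p : ℚ_[p]) ^ (v / N) * z) ^ N := by
    have hz' : (n : ℚ_[p]) * (z : ℚ_[p]) ^ N = w * (p : ℚ_[p]) ^ (-v) := by
      exact_mod_cast congrArg ((↑) : ℤ_[p] → ℚ_[p]) hz
    have hpv : (p : ℚ_[p]) ^ v = (p : ℚ_[p]) ^ (v % N).toNat * ((p : ℚ_[p]) ^ (v / N)) ^ N := by
      conv_lhs => rw [hv]
      rw [zpow_add₀ p_ne_zero, zpow_natCast, mul_comm (N : ℤ), zpow_mul, zpow_natCast, mul_comm]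
    calc w = (p : ℚ_[p]) ^ v * (w * (p : ℚ_[p]) ^ (-v)) := by
          rw [mul_left_comm, ← zpow_add₀ p_ne_zero, add_neg_cancel, zpow_zero, mul_one]
      _ = _ := by rw [← hz', hpv]; ring
  set r := (p : ℚ_[p]) ^ (v % N).toNat * n
  have hr : r ≠ 0 := by rintro h; rw [h, zero_mul] at hw'; exact hw hw'
  refine ⟨r, Finset.mem_erase.2 ⟨hr, Finset.mem_image.2 ⟨((v % N).toNat, n), ?_, rfl⟩⟩,
    div_ne_zero hw hr, _, by rw [hw', mul_div_cancel_left₀ _ hr]⟩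
  refine Finset.mem_product.2 ⟨Finset.mem_range.2 ?_, Finset.mem_range.2 hn⟩
  have := Int.emod_lt_of_pos v (by exact_mod_cast Nat.pos_of_ne_zero hN : (0 : ℤ) < N)
  omega

theorem exists_norm_mul_pow_le_one_lt (hN : N ≠ 0) {a : ℚ_[p]} (ha : a ≠ 0) :
    ∃ q : ℤ, ‖a * ((p : ℚ_[p]) ^ q) ^ N‖ ≤ 1 ∧ 1 < (p : ℝ) ^ N * ‖a * ((p : ℚ_[p]) ^ q) ^ N‖ := by
  have hN' : (0 : ℤ) < N := by exact_mod_cast Nat.pos_of_ne_zero hN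
  have hk := Int.emod_lt_of_pos a.valuation hN'
  have hk₀ := Int.emod_nonneg a.valuation hN'.ne'
  have hnorm : ‖a * ((p : ℚ_[p]) ^ (-(a.valuation / N))) ^ N‖ = (p : ℝ) ^ (-(a.valuation % N)) := by
    rw [← zpow_natCast, ← zpow_mul, norm_mul, Padic.norm_p_zpow,
      Padic.norm_eq_zpow_neg_valuation ha,
      ← zpow_add₀ p_pos.ne', Int.emod_def]
    ring_nf
  refine ⟨-(a.valuation / N), ?_, ?_⟩ <;> rw [hnorm]
  · exact zpow_le_one_of_nonpos₀ one_lt_p.le (by omega)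
  · rw [← zpow_natCast, ← zpow_add₀ p_pos.ne']
    exact one_lt_zpow₀ one_lt_p (by omega)

theorem pow_mul_mem_PNstar {g : ℚ_[p]} (hg : g ∈ PNstar p N) {a : ℚ_[p]} (ha : a ≠ 0) :
    a ^ N * g ∈ PNstar p N := by
  obtain ⟨hg0, y, rfl⟩ := hg
  exact ⟨mul_ne_zero (pow_ne_zero _ ha) hg0, a * y, mul_pow a y N⟩

theorem norm_le_of_lt_pow_mul {g g₀ : ℚ_[p]} (hg : g ∈ PN p N) (hg₀ : g₀ ∈ PN p N)
    (h : ‖g₀‖ < (p : ℝ) ^ N * ‖g‖) : ‖g₀‖ ≤ ‖g‖ := by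
  by_contra! hlt
  obtain ⟨y, rfl⟩ := hg
  obtain ⟨y₀, rfl⟩ := hg₀
  rw [norm_pow, norm_pow] at h hlt
  have hy : ‖y‖ < ‖y₀‖ := lt_of_pow_lt_pow_left₀ N (norm_nonneg _) hlt
  have hy₀ : 0 < ‖y₀‖ := (norm_nonneg _).trans_lt hy
  have hdiv : ‖y / y₀‖ ≤ (p : ℝ) ^ (-1 : ℤ) := by
    refine (Padic.norm_lt_pow_iff_norm_le_pow_sub_one _ 0).1 ?_
    rwa [norm_div, zpow_zero, div_lt_one hy₀]
  rw [norm_div, div_le_iff₀ hy₀, zpow_neg_one, ← div_eq_inv_mul, le_div_iff₀ p_pos] at hdiv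
  have := pow_le_pow_left₀ (by positivity) hdiv N
  rw [mul_pow] at this
  linarith

theorem norm_mul_le_of_lt_pow_mul (lam : ℚ_[p]) {g g₀ : ℚ_[p]} (hg : g ∈ PN p N)
    (hg₀ : g₀ ∈ PN p N) (h : ‖lam * g₀‖ < (p : ℝ) ^ N * ‖lam * g‖) : ‖lam * g₀‖ ≤ ‖lam * g‖ := by
  rw [norm_mul, norm_mul] at h ⊢
  rcases (norm_nonneg lam).eq_or_lt with hlam | hlam
  · simp [← hlam]
  · refine mul_le_mul_of_nonneg_left (norm_le_of_lt_pow_mul hg hg₀ ?_) hlam.le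
    rw [mul_left_comm] at h
    exact lt_of_mul_lt_mul_left h hlam.le

theorem coe_nnnorm_le_coe_nnnorm {E : Type*} [SeminormedAddGroup E] {a b : E} :
    (‖a‖₊ : ℝ≥0∞) ≤ ‖b‖₊ ↔ ‖a‖ ≤ ‖b‖ :=
  ENNReal.coe_le_coe.trans NNReal.coe_le_coe.symm

variable {L : Language} [L.Structure ℚ_[p] ]

theorem hasDefSkolem_of_forall_hasDefinableSkolemFunctions
    (h : ∀ m n, HasDefinableSkolemFunctions L (univ : Set ℚ_[p]) (Fin m) (Fin n)) :
    HasDefSkolem p L := by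
  intro m n S hS
  obtain ⟨σ, hσ, hσS⟩ := h m n S hS
  exact ⟨σ, (hS.exists_of_finite.preimage_comp Sum.inl).inter hσ.definable_setOf_comp_inr_eq, hσS⟩

theorem DefFunOn.exists_definableFun {β : Type} {X : Set (β → ℚ_[p])} {f : (β → ℚ_[p]) → ℚ_[p]}
    (hf : DefFunOn p L X f) (hX : LDef p L X) :
    ∃ g, (univ : Set ℚ_[p]).DefinableFun L g ∧ ∀ x ∈ X, g x = f x := by
  classical
  refine ⟨fun x => if x ∈ X then f x else 0, ?_, fun x hx => if_pos hx⟩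
  have hgraph := Definable.preimage_comp (Sum.elim some fun _ => none) hf
  have hzero := (DefinableFun.proj L (A := univ) (i := (none : Option β))).ofPred_eq_const
    (mem_univ (0 : ℚ_[p]))
  unfold DefinableFun
  convert hgraph.union ((Definable.preimage_comp some hX).compl.inter hzero) using 1
  ext w
  by_cases hw : w ∘ some ∈ X <;> simp [Function.tupleGraph, Function.comp_assoc, hw, eq_comm]

theorem PCell.elim_mem_toSet {m : ℕ} {G : Set ℚ_[p]} (H : PCell p L m G)
    {x : Fin m → ℚ_[p]} {t : ℚ_[p]} :
    Sum.elim x (fun _ => t) ∈ H.toSet ↔ x ∈ H.base ∧ H.ν.val x ≤ ‖t - H.c x‖₊ ∧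
      (‖t - H.c x‖₊ : ℝ≥0∞) ≤ H.μ.val x ∧ ∃ g ∈ G, t - H.c x = H.lam * g :=
  Iff.rfl

def PCell.HasDefinableSection {m : ℕ} {G : Set ℚ_[p]} (H : PCell p L m G) : Prop :=
  ∃ s, (univ : Set ℚ_[p]).DefinableFun L s ∧ ∀ x ∈ H.base, Sum.elim x (fun _ => s x) ∈ H.toSet

theorem PCell.hasDefinableSection_of_lam_eq_zero {m : ℕ} {G : Set ℚ_[p]} (H : PCell p L m G)
    (hlam : H.lam = 0) : H.HasDefinableSection := by
  obtain ⟨c, hc, hcH⟩ := H.c_def.exists_definableFun H.base_def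
  refine ⟨c, hc, fun x hx => ?_⟩
  obtain ⟨t, ht⟩ := H.fiber_nonempty x hx
  obtain ⟨g, -, htg⟩ := ht.2.2
  rw [hlam, zero_mul, sub_eq_zero] at htg
  rw [hcH x hx, ← htg]
  exact ⟨hx, ht⟩

variable (φ : Language.ring →ᴸ L) [φ.IsExpansionOn ℚ_[p] ]
include φ

theorem definableFun_eval {α : Type} (q : MvPolynomial α ℚ_[p]) :
    (univ : Set ℚ_[p]).DefinableFun L fun v => MvPolynomial.eval v q := by
  have hgraph : Function.tupleGraph (fun v => MvPolynomial.eval v q) =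
      MvPolynomial.zeroLocus ℚ_[p] (Ideal.span
        (({MvPolynomial.rename some q - MvPolynomial.X none} : Finset _) :
          Set (MvPolynomial (Option α) ℚ_[p]))) := by
    ext v
    simp [Function.tupleGraph, MvPolynomial.zeroLocus_span, MvPolynomial.eval_rename, sub_eq_zero]
  have hsemi : SemiAlg p (Function.tupleGraph fun v => MvPolynomial.eval v q) := by
    let := FirstOrder.Ring.compatibleRingOfRing ℚ_[p]
    rw [hgraph]
    exact (FirstOrder.Ring.mvPolynomial_zeroLocus_definable _).mono (subset_univ _)
  exact hsemi.map_expansion φ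

theorem definableFun_eval_comp {α ι : Type} [Finite ι] (q : MvPolynomial ι ℚ_[p])
    {f : ι → (α → ℚ_[p]) → ℚ_[p]} (hf : ∀ i, (univ : Set ℚ_[p]).DefinableFun L (f i)) :
    (univ : Set ℚ_[p]).DefinableFun L fun x => MvPolynomial.eval (fun i => f i x) q :=
  (definableFun_eval φ q).comp hf

theorem definable₁_PNstar (N : ℕ) : (univ : Set ℚ_[p]).Definable₁ L (PNstar p N) := by
  have hne := ((DefinableFun.proj L (A := univ) (i := (0 : Fin 1))).ofPred_eq_const
    (mem_univ (0 : ℚ_[p]))).compl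
  have hpow := Definable.exists_of_finite (β := Unit) ((definableFun_eval φ
    (MvPolynomial.X (Sum.inr ()) ^ N : MvPolynomial (Fin 1 ⊕ Unit) ℚ_[p])).ofPred_eq
      (DefinableFun.proj L (i := Sum.inl 0)))
  unfold Definable₁
  convert hne.inter hpow using 2
  ext v
  simp only [PNstar, mem_ofPred_eq, mem_inter_iff, mem_compl_iff, MvPolynomial.eval_pow,
    MvPolynomial.eval_X, Sum.elim_inr, Sum.elim_inl]
  exact and_congr_right fun _ => ⟨fun ⟨y, hy⟩ => ⟨fun _ => y, hy⟩, fun ⟨u, hu⟩ => ⟨u (), hu⟩⟩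

theorem exists_definableFun_sub_mem_PNstar (hN : N ≠ 0) {α : Type} {c f : (α → ℚ_[p]) → ℚ_[p]}
    (hc : (univ : Set ℚ_[p]).DefinableFun L c) (hf : (univ : Set ℚ_[p]).DefinableFun L f)
    {lam : ℚ_[p]} (hlam : lam ≠ 0) :
    ∃ s, (univ : Set ℚ_[p]).DefinableFun L s ∧ ∀ x, f x ≠ 0 → ∃ g ∈ PNstar p N,
      s x = c x + lam * g ∧ ‖lam * g‖ ≤ ‖f x‖ ∧ ‖f x‖ < (p : ℝ) ^ N * ‖lam * g‖ := by
  obtain ⟨R, hR0, hR⟩ := exists_finset_div_mem_PNstar (p := p) hN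
  choose! q hq using fun r (hr : r ∈ R) =>
    exists_norm_mul_pow_le_one_lt hN (div_ne_zero hlam (ne_of_mem_of_not_mem hr hR0))
  have hpiece : ∀ b : ℚ_[p], (univ : Set ℚ_[p]).DefinableFun L fun x => c x + b * f x := fun b => by
    convert definableFun_eval_comp φ (MvPolynomial.X 0 + MvPolynomial.C b * MvPolynomial.X 1)
      (f := ![c, f]) (Fin.forall_fin_two.2 ⟨hc, hf⟩) using 2
    simp
  have hdiv : ∀ r : ℚ_[p], (univ : Set ℚ_[p]).DefinableFun L fun x => f x / r := fun r => by
    convert definableFun_eval_comp φ (MvPolynomial.X 0 * MvPolynomial.C r⁻¹) (f := ![f])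
      (Fin.forall_fin_one.2 hf) using 2
    simp [div_eq_mul_inv]
  obtain ⟨s, hs, hsR⟩ := exists_definableFun_glue R (P := fun r => {x | f x / r ∈ PNstar p N})
    (f := fun r x => c x + lam / r * ((p : ℚ_[p]) ^ q r) ^ N * f x) hc
    (fun r _ => (definable₁_PNstar φ N).definable_setOf_mem (hdiv r)) (fun r _ => hpiece _)
  refine ⟨s, hs, fun x hx => ?_⟩
  obtain ⟨r, hr, hxr⟩ := hR (f x) hx
  obtain ⟨r, hr, hxr, hsx⟩ := hsR x r hr hxr
  have hr0 : r ≠ 0 := ne_of_mem_of_not_mem hr hR0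
  obtain ⟨hle, hlt⟩ := hq r hr
  have hg : lam * (((p : ℚ_[p]) ^ q r) ^ N * (f x / r)) =
      lam / r * ((p : ℚ_[p]) ^ q r) ^ N * f x := by
    field_simp
  refine ⟨_, pow_mul_mem_PNstar hxr (zpow_ne_zero _ p_ne_zero), by rw [hsx, hg], ?_, ?_⟩ <;>
    rw [hg, norm_mul]
  · exact mul_le_of_le_one_left (norm_nonneg _) hle
  · rw [← mul_assoc]
    exact lt_mul_of_one_lt_left (norm_pos_iff.2 hx) hlt

theorem PCell.hasDefinableSection_of_μ_eq_fn (hN : N ≠ 0) {m : ℕ} (H : PCell p L m (PNstar p N))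
    (hlam : H.lam ≠ 0) {f : (Fin m → ℚ_[p]) → ℚ_[p]} (hμ : H.μ = .fn f) :
    H.HasDefinableSection := by
  obtain ⟨hf0, hfdef⟩ : (∀ x ∈ H.base, f x ≠ 0) ∧ DefFunOn p L H.base f := by
    simpa [hμ, CBound.WF] using H.μ_wf
  obtain ⟨c, hc, hcH⟩ := H.c_def.exists_definableFun H.base_def
  obtain ⟨f', hf', hfH⟩ := hfdef.exists_definableFun H.base_def
  obtain ⟨s, hs, hsg⟩ := exists_definableFun_sub_mem_PNstar φ hN hc hf' hlam
  refine ⟨s, hs, fun x hx => ?_⟩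
  obtain ⟨g, hg, hsx, hle, hlt⟩ := hsg x (by rw [hfH x hx]; exact hf0 x hx)
  obtain ⟨t, hνt, hμt, g₀, hg₀, htg⟩ := H.fiber_nonempty x hx
  have hsc : s x - H.c x = H.lam * g := by rw [hsx, hcH x hx]; ring
  rw [hμ, CBound.val, coe_nnnorm_le_coe_nnnorm, htg, ← hfH x hx] at hμt
  refine H.elim_mem_toSet.2 ⟨hx, hνt.trans ?_, ?_, g, hg, hsc⟩
  · rw [coe_nnnorm_le_coe_nnnorm, htg, hsc]
    exact norm_mul_le_of_lt_pow_mul _ hg.2 hg₀.2 (hμt.trans_lt hlt)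
  · rw [hμ, CBound.val, coe_nnnorm_le_coe_nnnorm, hsc, ← hfH x hx]
    exact hle

theorem PCell.hasDefinableSection_of_μ_eq_inf (hN : N ≠ 0) {m : ℕ} (H : PCell p L m (PNstar p N))
    (hlam : H.lam ≠ 0) (hμ : H.μ = .inf) : H.HasDefinableSection := by
  obtain ⟨c, hc, hcH⟩ := H.c_def.exists_definableFun H.base_def
  have hμ' : ∀ x, H.μ.val x = ⊤ := by simp [hμ, CBound.val]
  rcases hν : H.ν with _ | _ | f
  · refine ⟨fun x => c x + H.lam, ?_, fun x hx => H.elim_mem_toSet.2 ⟨hx, by simp [hν, CBound.val],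
      by simp [hμ'], 1, ⟨one_ne_zero, 1, one_pow N⟩, by simp [hcH x hx]⟩⟩
    convert definableFun_eval_comp φ (MvPolynomial.X 0 + MvPolynomial.C H.lam) (f := ![c])
      (Fin.forall_fin_one.2 hc) using 2
    simp
  · obtain ⟨x, hx⟩ := H.base_nonempty
    obtain ⟨t, hνt, -⟩ := H.fiber_nonempty x hx
    simp [hν, CBound.val] at hνt
  · obtain ⟨hf0, hfdef⟩ : (∀ x ∈ H.base, f x ≠ 0) ∧ DefFunOn p L H.base f := by
      simpa [hν, CBound.WF] using H.ν_wf
    obtain ⟨f', hf', hfH⟩ := hfdef.exists_definableFun H.base_def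
    -- aim at the norm `p ^ N * ‖f x‖`, so that the chosen point has norm `> ‖f x‖`
    have hf'' : (univ : Set ℚ_[p]).DefinableFun L fun x => (p : ℚ_[p]) ^ (-(N : ℤ)) * f' x := by
      convert definableFun_eval_comp φ
        (MvPolynomial.C ((p : ℚ_[p]) ^ (-(N : ℤ))) * MvPolynomial.X 0) (f := ![f'])
        (Fin.forall_fin_one.2 hf') using 2
      simp
    obtain ⟨s, hs, hsg⟩ := exists_definableFun_sub_mem_PNstar φ hN hc hf'' hlam
    refine ⟨s, hs, fun x hx => ?_⟩
    obtain ⟨g, hg, hsx, -, hlt⟩ :=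
      hsg x (mul_ne_zero (zpow_ne_zero _ p_ne_zero) (by rw [hfH x hx]; exact hf0 x hx))
    rw [norm_mul, Padic.norm_p_zpow, neg_neg, zpow_natCast, hfH x hx] at hlt
    refine H.elim_mem_toSet.2 ⟨hx, ?_, by simp [hμ'], g, hg, by rw [hsx, hcH x hx]; ring⟩
    rw [hν, CBound.val, coe_nnnorm_le_coe_nnnorm, hsx, hcH x hx, add_sub_cancel_left]
    exact (lt_of_mul_lt_mul_left hlt (by positivity)).le

theorem PCell.hasDefinableSection (hN : N ≠ 0) {m : ℕ} (H : PCell p L m (PNstar p N)) :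
    H.HasDefinableSection := by
  by_cases hlam : H.lam = 0
  · exact H.hasDefinableSection_of_lam_eq_zero hlam
  rcases hμ : H.μ with _ | _ | f
  · obtain ⟨x, hx⟩ := H.base_nonempty
    obtain ⟨t, -, hμt, g, hg, htg⟩ := H.fiber_nonempty x hx
    simp only [hμ, CBound.val, nonpos_iff_eq_zero, ENNReal.coe_eq_zero, nnnorm_eq_zero] at hμt
    exact (mul_ne_zero hlam hg.1 (htg ▸ hμt)).elim
  · exact H.hasDefinableSection_of_μ_eq_inf φ hN hlam hμ
  · exact H.hasDefinableSection_of_μ_eq_fn φ hN hlam hμ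

theorem hasDefinableSkolemFunctions_of_forall_eq_iUnion {m : ℕ}
    (h : ∀ S : Set (Fin m ⊕ Unit → ℚ_[p]), LDef p L S → ∃ N : ℕ, 1 ≤ N ∧
      ∃ (k : ℕ) (H : Fin k → PCell p L m (PNstar p N)), ⋃ j, (H j).toSet = S) :
    HasDefinableSkolemFunctions L (univ : Set ℚ_[p]) (Fin m) Unit := by
  intro S hS
  obtain ⟨N, hN, k, H, hHS⟩ := h S hS
  choose s hs hsH using fun j => (H j).hasDefinableSection φ (Nat.one_le_iff_ne_zero.1 hN)
  obtain ⟨τ, hτ, hτH⟩ := exists_definableFun_glue Finset.univ (P := fun j => (H j).base) (f := s)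
    (L.definableFun_const _ (mem_univ 0)) (fun j _ => (H j).base_def) (fun j _ => hs j)
  refine ⟨fun x _ => τ x, fun _ => hτ, ?_⟩
  rintro x ⟨y, hy⟩
  rw [← hHS] at hy ⊢
  obtain ⟨j, hj⟩ := mem_iUnion.1 hy
  obtain ⟨j', -, hxj', hτj'⟩ := hτH x j (Finset.mem_univ _) hj.1
  have : Sum.elim x (fun _ => τ x) ∈ (H j').toSet := hτj' ▸ hsH j' x hxj'
  exact mem_iUnion.2 ⟨j', this⟩

end

/-- If Denef's cell decomposition holds in `(ℚ_p, ℒ)` — every finite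
family of definable subsets of `ℚ_p^{m+1}` is refined, for some `N ≥ 1`, by a finite
family of presented cells mod `P_N^*` — then `(ℚ_p, ℒ)` has definable Skolem functions. -/
theorem hasDefSkolem_of_cell_decomposition
    (L : Language) [L.Structure ℚ_[p] ]
    (φ : Language.ring →ᴸ L) [φ.IsExpansionOn ℚ_[p] ]
    (hcd : ∀ (m : ℕ) (I : Type) [Fintype I] (A : I → Set (Fin m ⊕ Unit → ℚ_[p])),
      (∀ i, LDef p L (A i)) →
      ∃ N : ℕ, 1 ≤ N ∧
        ∃ (k : ℕ) (H : Fin k → PCell p L m (PNstar p N)),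
          (∀ j j' : Fin k, j ≠ j' → Disjoint (H j).toSet (H j').toSet) ∧
          (⋃ j, (H j).toSet) = ⋃ i, A i ∧
          ∀ (i : I) (j : Fin k), ((H j).toSet ∩ A i).Nonempty → (H j).toSet ⊆ A i) :
    HasDefSkolem p L :=
  hasDefSkolem_of_forall_hasDefinableSkolemFunctions <| HasDefinableSkolemFunctions.fin fun m =>
    hasDefinableSkolemFunctions_of_forall_eq_iUnion φ fun S hS => by
      obtain ⟨N, hN, k, H, -, hH, -⟩ := hcd m Unit (fun _ => S) fun _ => hS
      exact ⟨N, hN, k, H, hH.trans (Set.iUnion_const S)⟩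

end PadicMin
end
end

section
/- Let ℒ be a first-order language containing the language of rings and let ℚ_p carry an ℒ-structure extending its ring structure, and assume (ℚ_p, ℒ) is p-minimal. Let S ⊆ ℚ_p^m × |ℚ_p|^d be a definable set and let A ⊆ ℚ_p^m be the image of the coordinate projection of S onto ℚ_p^m. Then there is a definable function σ : A → |ℚ_p|^d such that (x, σ(x)) ∈ S for every x ∈ A. -/
/-!
Setting: `(ℚ_p, ℒ)` is an expansion of the field `ℚ_p` of `p`-adic numbers, i.e. `ℒ` is a
first-order language containing the language of rings (witnessed by a language morphism
`φ : Language.ring →ᴸ L` which is an expansion on `ℚ_p`), and `ℚ_p` carries an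
`ℒ`-structure extending its ring structure.  "Definable" means `ℒ`-definable with
parameters from `ℚ_p`; "semi-algebraic" means definable in the language of rings with
parameters from `ℚ_p`.  Tuples in `ℚ_p^β` are modelled as functions `β → ℚ_p`.
-/

open FirstOrder Language

noncomputable section

namespace PadicMin

variable (p : ℕ) [Fact p.Prime]

open scoped ENNReal NNReal

/-!
Nonzero norms on `ℚ_p` form the discrete group `p ^ ℤ`, so every nonempty `K ⊆ ℚ_p` has a
canonical norm: the largest norm `≤ 1` attained on `K` or, if all norms on `K` exceed `1`, the
smallest one. Choosing the norms of the last `d` coordinates one after the other in this way,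
each over the fiber cut out by the earlier choices, gives above every `x` in the projection of
`S` exactly one tuple of norms, and it lies in `S`. The choice only compares norms, and
`‖t‖ ≤ ‖s‖` is semi-algebraic: it holds iff `(y s) ^ (p + 1) = s ^ (p + 1) + p t ^ (p + 1)` has
a solution `y` (Hensel's lemma, since `p ∤ p + 1`). Hence the set of these points, which is the
graph of the section, is definable.
-/

section PadicNorm

variable {p}

theorem _root_.PadicInt.exists_pow_eq_of_norm_sub_one_lt_s12 {e : ℕ} (he : p.Coprime e)
    {c : ℤ_[p]} (hc : ‖c - 1‖ < 1) : ∃ y : ℤ_[p], y ^ e = c := by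
  set F : Polynomial ℤ_[p] := Polynomial.X ^ e - Polynomial.C c
  have hnorm : ‖F.aeval (1 : ℤ_[p])‖ < ‖F.derivative.aeval (1 : ℤ_[p])‖ ^ 2 := by
    simpa [F, Polynomial.derivative_X_pow, norm_sub_rev, PadicInt.norm_natCast_eq_one_iff.mpr he]
      using hc
  obtain ⟨y, hy, -⟩ := hensels_lemma hnorm
  exact ⟨y, by simpa [F, sub_eq_zero] using hy⟩

theorem _root_.Padic.norm_le_norm_iff_valuation_le {u w : ℚ_[p]} (hu : u ≠ 0) (hw : w ≠ 0) :
    ‖u‖ ≤ ‖w‖ ↔ w.valuation ≤ u.valuation := by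
  rw [Padic.norm_eq_zpow_neg_valuation hu, Padic.norm_eq_zpow_neg_valuation hw,
    zpow_le_zpow_iff_right₀ (mod_cast (Fact.out : p.Prime).one_lt), neg_le_neg_iff]

theorem _root_.Padic.norm_le_one_of_pow_eq_one_add_mul_pow {e : ℕ} (he : 2 ≤ e) {x y : ℚ_[p]}
    (h : y ^ e = 1 + p * x ^ e) : ‖x‖ ≤ 1 := by
  by_contra hx
  have hp : (p : ℝ) ≤ ‖x‖ := by
    simpa using (Padic.norm_le_pow_iff_norm_lt_pow_add_one x 0).not.mp hx
  have hx0 : x ≠ 0 := by rintro rfl; simp at hx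
  have hpx : 1 < ‖(p : ℚ_[p]) * x ^ e‖ := by
    have hp1 : (1 : ℝ) < p := mod_cast (Fact.out : p.Prime).one_lt
    rw [norm_mul, norm_pow, Padic.norm_p, inv_mul_eq_div, one_lt_div (by positivity)]
    calc (p : ℝ) < p * p := lt_mul_of_one_lt_right (by positivity) hp1
      _ ≤ ‖x‖ ^ 2 := by rw [sq]; gcongr
      _ ≤ ‖x‖ ^ e := pow_le_pow_right₀ (by linarith) he
  have hnorm : ‖y ^ e‖ = ‖(p : ℚ_[p]) * x ^ e‖ := by
    rw [h, Padic.add_eq_max_of_ne (by rw [norm_one]; exact hpx.ne), norm_one,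
      max_eq_right hpx.le]
  have hpx0 : (p : ℚ_[p]) * x ^ e ≠ 0 := norm_pos_iff.mp (by linarith)
  have hy0 : y ^ e ≠ 0 := norm_pos_iff.mp (by linarith)
  have hval : (y ^ e).valuation = ((p : ℚ_[p]) * x ^ e).valuation :=
    le_antisymm ((Padic.norm_le_norm_iff_valuation_le hpx0 hy0).mp hnorm.ge)
      ((Padic.norm_le_norm_iff_valuation_le hy0 hpx0).mp hnorm.le)
  rw [Padic.valuation_pow, Padic.valuation_mul (by simp [(Fact.out : p.Prime).ne_zero])
    (pow_ne_zero e hx0), Padic.valuation_p, Padic.valuation_pow] at hval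
  have hdvd : (e : ℤ) ∣ 1 := ⟨y.valuation - x.valuation, by linarith⟩
  have := Int.le_of_dvd one_pos hdvd
  omega

theorem _root_.Padic.norm_le_one_iff_exists_pow_eq (x : ℚ_[p]) :
    ‖x‖ ≤ 1 ↔ ∃ y : ℚ_[p], y ^ (p + 1) = 1 + p * x ^ (p + 1) := by
  refine ⟨fun hx => ?_, fun ⟨y, hy⟩ => Padic.norm_le_one_of_pow_eq_one_add_mul_pow
    (by linarith [(Fact.out : p.Prime).two_le]) hy⟩
  obtain ⟨x, rfl⟩ : ∃ x' : ℤ_[p], (x' : ℚ_[p]) = x := ⟨⟨x, hx⟩, rfl⟩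
  have hc : ‖(1 + p * x ^ (p + 1) : ℤ_[p]) - 1‖ < 1 := by
    rw [add_sub_cancel_left, norm_mul, PadicInt.norm_p]
    exact mul_lt_one_of_nonneg_of_lt_one_left (by positivity)
      (inv_lt_one_of_one_lt₀ (mod_cast (Fact.out : p.Prime).one_lt)) (PadicInt.norm_le_one _)
  obtain ⟨y, hy⟩ := PadicInt.exists_pow_eq_of_norm_sub_one_lt_s12
    (Nat.coprime_self_add_right.mpr (Nat.coprime_one_right p)) hc
  exact ⟨y, by simpa using congrArg ((↑) : ℤ_[p] → ℚ_[p]) hy⟩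

theorem _root_.Padic.norm_le_norm_iff_exists_pow_eq (s t : ℚ_[p]) :
    ‖t‖ ≤ ‖s‖ ↔ ∃ y : ℚ_[p], (y * s) ^ (p + 1) = s ^ (p + 1) + p * t ^ (p + 1) := by
  rcases eq_or_ne s 0 with rfl | hs
  · simp [(Fact.out : p.Prime).ne_zero]
  · rw [← div_le_one (norm_pos_iff.mpr hs), ← norm_div, Padic.norm_le_one_iff_exists_pow_eq]
    have hs' : s ^ (p + 1) ≠ 0 := pow_ne_zero _ hs
    refine exists_congr fun y => ?_
    rw [← mul_left_inj' hs', add_mul, one_mul, mul_assoc, div_pow, div_mul_cancel₀ _ hs',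
      mul_pow]

end PadicNorm

section CanonicalNorm

variable {p}

theorem _root_.Padic.exists_norm_max_of_norm_le_one {K : Set ℚ_[p]} (hK : ∃ u ∈ K, ‖u‖ ≤ 1) :
    ∃ w ∈ K, ‖w‖ ≤ 1 ∧ ∀ u ∈ K, ‖u‖ ≤ 1 → ‖u‖ ≤ ‖w‖ := by
  by_cases hK0 : ∃ u ∈ K, u ≠ 0 ∧ ‖u‖ ≤ 1
  · obtain ⟨-, ⟨w, hwK, hw0, hw1, rfl⟩, hmin⟩ := Int.exists_least_of_bdd
      (P := fun v => ∃ u ∈ K, u ≠ 0 ∧ ‖u‖ ≤ 1 ∧ u.valuation = v)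
      ⟨0, fun _ ⟨u, _, _, hu1, hv⟩ => hv ▸ (Padic.norm_le_one_iff_val_nonneg u).mp hu1⟩
      (by obtain ⟨u, hu⟩ := hK0; exact ⟨_, u, hu.1, hu.2.1, hu.2.2, rfl⟩)
    refine ⟨w, hwK, hw1, fun u hu hu1 => ?_⟩
    rcases eq_or_ne u 0 with rfl | hu0
    · simp
    · exact (Padic.norm_le_norm_iff_valuation_le hu0 hw0).mpr (hmin _ ⟨u, hu, hu0, hu1, rfl⟩)
  · obtain ⟨w, hwK, hw1⟩ := hK
    refine ⟨w, hwK, hw1, fun u hu hu1 => ?_⟩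
    obtain rfl : u = 0 := by_contra fun hu0 => hK0 ⟨u, hu, hu0, hu1⟩
    simp

theorem _root_.Padic.exists_norm_min_of_one_le_norm {K : Set ℚ_[p]} (hK : K.Nonempty)
    (h1 : ∀ u ∈ K, 1 ≤ ‖u‖) : ∃ w ∈ K, ∀ u ∈ K, ‖w‖ ≤ ‖u‖ := by
  have hK0 : ∀ u ∈ K, u ≠ 0 := fun u hu => norm_pos_iff.mp (one_pos.trans_le (h1 u hu))
  have hbdd : ∀ u ∈ K, u.valuation ≤ 0 := fun u hu => by
    simpa using (Padic.norm_le_norm_iff_valuation_le one_ne_zero (hK0 u hu)).mp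
      (by simpa using h1 u hu)
  obtain ⟨-, ⟨w, hwK, rfl⟩, hmax⟩ := Int.exists_greatest_of_bdd
    (P := fun v => ∃ u ∈ K, u.valuation = v)
    ⟨0, fun _ ⟨u, hu, hv⟩ => hv ▸ hbdd u hu⟩ (by obtain ⟨u, hu⟩ := hK; exact ⟨_, u, hu, rfl⟩)
  exact ⟨w, hwK, fun u hu =>
    (Padic.norm_le_norm_iff_valuation_le (hK0 w hwK) (hK0 u hu)).mpr (hmax _ ⟨u, hu, rfl⟩)⟩

def IsCanonicalNorm (K : Set ℚ_[p]) (w : ℚ_[p]) : Prop :=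
  (‖w‖ ≤ 1 ∧ ∀ u ∈ K, ‖u‖ ≤ 1 → ‖u‖ ≤ ‖w‖) ∨ ((∀ u ∈ K, 1 < ‖u‖) ∧ ∀ u ∈ K, ‖w‖ ≤ ‖u‖)

theorem exists_isCanonicalNorm {K : Set ℚ_[p]} (hK : K.Nonempty) :
    ∃ w ∈ K, IsCanonicalNorm K w := by
  by_cases h1 : ∃ u ∈ K, ‖u‖ ≤ 1
  · obtain ⟨w, hwK, hw⟩ := Padic.exists_norm_max_of_norm_le_one h1
    exact ⟨w, hwK, Or.inl hw⟩
  · push Not at h1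
    obtain ⟨w, hwK, hw⟩ := Padic.exists_norm_min_of_one_le_norm hK fun u hu => (h1 u hu).le
    exact ⟨w, hwK, Or.inr ⟨h1, hw⟩⟩

theorem norm_eq_of_isCanonicalNorm {K : Set ℚ_[p]} {w w' : ℚ_[p]} (hw : w ∈ K) (hw' : w' ∈ K)
    (h : IsCanonicalNorm K w) (h' : IsCanonicalNorm K w') : ‖w‖ = ‖w'‖ := by
  rcases h with ⟨h1, hmax⟩ | ⟨hgt, hmin⟩ <;> rcases h' with ⟨h1', hmax'⟩ | ⟨hgt', hmin'⟩
  · exact le_antisymm (hmax' w hw h1) (hmax w' hw' h1')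
  · exact absurd h1 (hgt' w hw).not_ge
  · exact absurd h1' (hgt w' hw').not_ge
  · exact le_antisymm (hmin w' hw') (hmin' w hw)

theorem isCanonicalNorm_congr {K : Set ℚ_[p]} {w w' : ℚ_[p]} (h : ‖w‖ = ‖w'‖) :
    IsCanonicalNorm K w ↔ IsCanonicalNorm K w' := by
  rw [IsCanonicalNorm, IsCanonicalNorm, h]

end CanonicalNorm

section Definability

variable {p} {L : Language} [L.Structure ℚ_[p] ] {β γ : Type}

open MvPolynomial in
theorem semiAlg_norm_le : SemiAlg p {x : Fin 2 → ℚ_[p] | ‖x 0‖ ≤ ‖x 1‖} := by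
  let := FirstOrder.Ring.compatibleRingOfRing ℚ_[p]
  let P : MvPolynomial (Fin 2 ⊕ Fin 1) ℚ_[p] := (X (.inr 0) * X (.inl 1)) ^ (p + 1) -
    X (.inl 1) ^ (p + 1) - C (p : ℚ_[p]) * X (.inl 0) ^ (p + 1)
  have hP := ((FirstOrder.Ring.mvPolynomial_zeroLocus_definable {P}).mono
    (Set.subset_univ _)).exists_of_finite
  have hset : {x : Fin 2 → ℚ_[p] | ‖x 0‖ ≤ ‖x 1‖} =
      {v | ∃ u : Fin 1 → ℚ_[p], Sum.elim v u ∈ zeroLocus ℚ_[p] (Ideal.span {P})} := by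
    ext x
    simp [zeroLocus_span, P, Padic.norm_le_norm_iff_exists_pow_eq, sub_sub, sub_eq_zero,
      Fin.exists_fin_succ_pi]
  rw [Finset.coe_singleton] at hP
  rw [SemiAlg, hset]
  exact hP

theorem ldef_norm_le_norm (φ : Language.ring →ᴸ L) [φ.IsExpansionOn ℚ_[p] ]
    {f g : (β → ℚ_[p]) → ℚ_[p]} (hf : Set.univ.DefinableFun L f)
    (hg : Set.univ.DefinableFun L g) : LDef p L {x | ‖f x‖ ≤ ‖g x‖} := by
  have hF : Set.univ.DefinableMap L (fun x => ![f x, g x]) := fun i => by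
    fin_cases i <;> simpa
  simpa [LDef] using (semiAlg_norm_le.map_expansion φ).preimage_map hF

theorem ldef_norm_le (φ : Language.ring →ᴸ L) [φ.IsExpansionOn ℚ_[p] ] (a b : β) :
    LDef p L {x | ‖x a‖ ≤ ‖x b‖} :=
  ldef_norm_le_norm φ (Set.DefinableFun.proj L) (Set.DefinableFun.proj L)

theorem ldef_norm_le_one (φ : Language.ring →ᴸ L) [φ.IsExpansionOn ℚ_[p] ] (a : β) :
    LDef p L {x | ‖x a‖ ≤ 1} := by
  simpa using ldef_norm_le_norm φ (Set.DefinableFun.proj L)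
    (L.definableFun_const β (Set.mem_univ (1 : ℚ_[p])))

theorem ldef_const (q : Prop) : LDef p L {_x : β → ℚ_[p] | q} := by
  by_cases hq : q <;> simp [LDef, hq]

theorem ldef_and {P Q : (β → ℚ_[p]) → Prop} (hP : LDef p L {x | P x})
    (hQ : LDef p L {x | Q x}) : LDef p L {x | P x ∧ Q x} :=
  Set.Definable.inter hP hQ

theorem ldef_norm_eq (φ : Language.ring →ᴸ L) [φ.IsExpansionOn ℚ_[p] ] (a b : β) :
    LDef p L {x | ‖x a‖ = ‖x b‖} := by
  simpa only [le_antisymm_iff] using ldef_and (ldef_norm_le φ a b) (ldef_norm_le φ b a)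

theorem ldef_or {P Q : (β → ℚ_[p]) → Prop} (hP : LDef p L {x | P x})
    (hQ : LDef p L {x | Q x}) : LDef p L {x | P x ∨ Q x} :=
  Set.Definable.union hP hQ

theorem ldef_not {P : (β → ℚ_[p]) → Prop} (hP : LDef p L {x | P x}) :
    LDef p L {x | ¬P x} :=
  Set.Definable.compl hP

theorem ldef_imp {P Q : (β → ℚ_[p]) → Prop} (hP : LDef p L {x | P x})
    (hQ : LDef p L {x | Q x}) : LDef p L {x | P x → Q x} := by
  simpa only [imp_iff_not_or] using ldef_or (ldef_not hP) hQ

theorem ldef_iInter_of_finite {ι : Type*} [Finite ι] {P : ι → (β → ℚ_[p]) → Prop}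
    (hP : ∀ i, LDef p L {x | P i x}) : LDef p L {x | ∀ i, P i x} := by
  simpa [LDef, Set.iInter_ofPred] using Set.definable_iInter_of_finite hP

theorem ldef_exists_of_finite [Finite γ] {P : (β → ℚ_[p]) → (γ → ℚ_[p]) → Prop}
    (hP : LDef p L {w : β ⊕ γ → ℚ_[p] | P (w ∘ Sum.inl) (w ∘ Sum.inr)}) :
    LDef p L {x | ∃ y, P x y} := by
  simpa [LDef] using Set.Definable.exists_of_finite hP

theorem ldef_forall {P : (β → ℚ_[p]) → ℚ_[p] → Prop}
    (hP : LDef p L {w : β ⊕ Fin 1 → ℚ_[p] | P (w ∘ Sum.inl) (w (Sum.inr 0))}) :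
    LDef p L {x | ∀ t, P x t} := by
  unfold LDef at *
  convert Set.Definable.forall_of_finite hP using 1
  ext x
  simpa using ⟨fun h u => h (u 0), fun h t => h fun _ => t⟩

theorem ldef_comp (f : γ → β) {P : (γ → ℚ_[p]) → Prop} (hP : LDef p L {x | P x}) :
    LDef p L {x : β → ℚ_[p] | P (x ∘ f)} :=
  Set.Definable.preimage_comp f hP

theorem ldef_update_mem [DecidableEq β] {T : Set (β → ℚ_[p])} (hT : LDef p L T) (a : β) :
    LDef p L {w : β ⊕ Fin 1 → ℚ_[p] | Function.update (w ∘ Sum.inl) a (w (Sum.inr 0)) ∈ T} := by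
  have hupdate (w : β ⊕ Fin 1 → ℚ_[p]) : Function.update (w ∘ Sum.inl) a (w (Sum.inr 0)) =
      w ∘ fun b => if b = a then Sum.inr 0 else Sum.inl b := by
    ext b
    by_cases hb : b = a <;> simp [hb]
  simpa only [hupdate] using ldef_comp (P := (· ∈ T)) _ hT

theorem ldef_isCanonicalNorm_fiber (φ : Language.ring →ᴸ L) [φ.IsExpansionOn ℚ_[p] ]
    [DecidableEq β] {T : Set (β → ℚ_[p])} (hT : LDef p L T) (a : β) :
    LDef p L {x | IsCanonicalNorm {w | Function.update x a w ∈ T} (x a)} := by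
  have hmem := ldef_update_mem hT a
  have hgt : LDef p L {w : β ⊕ Fin 1 → ℚ_[p] | 1 < ‖w (Sum.inr 0)‖} := by
    simpa only [not_le] using ldef_not (ldef_norm_le_one φ _)
  exact ldef_or
    (ldef_and (ldef_norm_le_one φ a) (ldef_forall
      (ldef_imp hmem (ldef_imp (ldef_norm_le_one φ _) (ldef_norm_le φ _ _)))))
    (ldef_and (ldef_forall (ldef_imp hmem hgt))
      (ldef_forall (ldef_imp hmem (ldef_norm_le φ _ _))))

end Definability

section NormSection

variable {p} {α : Type} {d : ℕ}

def prefixExtendable (S : Set (α ⊕ Fin d → ℚ_[p])) (i : ℕ) : Set (α ⊕ Fin d → ℚ_[p]) :=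
  {z | ∃ y, Sum.elim (z ∘ Sum.inl) y ∈ S ∧ ∀ j : Fin d, (j : ℕ) < i → ‖y j‖ = ‖z (Sum.inr j)‖}

def coordFiber [DecidableEq α] (S : Set (α ⊕ Fin d → ℚ_[p])) (i : Fin d)
    (z : α ⊕ Fin d → ℚ_[p]) : Set ℚ_[p] :=
  {w | Function.update z (Sum.inr i) w ∈ prefixExtendable S (i + 1)}

def canonicalPoints [DecidableEq α] (S : Set (α ⊕ Fin d → ℚ_[p])) : Set (α ⊕ Fin d → ℚ_[p]) :=
  {z | z ∈ prefixExtendable S d ∧ ∀ i, IsCanonicalNorm (coordFiber S i z) (z (Sum.inr i))}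

variable {S : Set (α ⊕ Fin d → ℚ_[p])} {z z' : α ⊕ Fin d → ℚ_[p]}

theorem prefixExtendable_anti : Antitone (prefixExtendable S) :=
  fun _ _ hii' _ ⟨y, hyS, hy⟩ => ⟨y, hyS, fun j hj => hy j (hj.trans_le hii')⟩

theorem mem_prefixExtendable_congr {i : ℕ} (hl : z ∘ Sum.inl = z' ∘ Sum.inl)
    (hn : ∀ j : Fin d, (j : ℕ) < i → ‖z (Sum.inr j)‖ = ‖z' (Sum.inr j)‖) :
    z ∈ prefixExtendable S i ↔ z' ∈ prefixExtendable S i := by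
  simp only [prefixExtendable, Set.mem_ofPred_eq, hl]
  exact exists_congr fun y => and_congr_right fun _ =>
    forall_congr' fun j => imp_congr_right fun hj => by rw [hn j hj]

theorem coordFiber_congr [DecidableEq α] {i : Fin d} (hl : z ∘ Sum.inl = z' ∘ Sum.inl)
    (hn : ∀ j < i, ‖z (Sum.inr j)‖ = ‖z' (Sum.inr j)‖) :
    coordFiber S i z = coordFiber S i z' := by
  ext w
  refine mem_prefixExtendable_congr ?_ fun j hj => ?_
  · simpa [Function.update_comp_eq_of_forall_ne] using hl
  · rcases eq_or_ne j i with rfl | hji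
    · simp
    · simpa [hji] using hn j (by omega)

theorem self_mem_coordFiber [DecidableEq α] {i : Fin d}
    (hz : z ∈ prefixExtendable S (i + 1)) : z (Sum.inr i) ∈ coordFiber S i z := by
  simpa [coordFiber] using hz

theorem mem_canonicalPoints_congr [DecidableEq α] (hl : z ∘ Sum.inl = z' ∘ Sum.inl)
    (hn : ∀ j, ‖z (Sum.inr j)‖ = ‖z' (Sum.inr j)‖) :
    z ∈ canonicalPoints S ↔ z' ∈ canonicalPoints S :=
  and_congr (mem_prefixExtendable_congr hl fun j _ => hn j) <| forall_congr' fun i => by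
    rw [coordFiber_congr hl fun j _ => hn j, isCanonicalNorm_congr (hn i)]

theorem norm_eq_of_mem_canonicalPoints [DecidableEq α] (hz : z ∈ canonicalPoints S)
    (hz' : z' ∈ canonicalPoints S) (hl : z ∘ Sum.inl = z' ∘ Sum.inl) (j : Fin d) :
    ‖z (Sum.inr j)‖ = ‖z' (Sum.inr j)‖ := by
  induction j using WellFoundedLT.induction with
  | _ j ih =>
    have hfiber := coordFiber_congr (S := S) hl ih
    have hW := prefixExtendable_anti (S := S) (show (j : ℕ) + 1 ≤ d by omega)
    exact norm_eq_of_isCanonicalNorm (self_mem_coordFiber (hW hz.1))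
      (hfiber ▸ self_mem_coordFiber (hW hz'.1)) (hz.2 j) (hfiber ▸ hz'.2 j)

theorem mem_of_mem_canonicalPoints [DecidableEq α]
    (hinv : ∀ z z' : α ⊕ Fin d → ℚ_[p], z ∘ Sum.inl = z' ∘ Sum.inl →
      (∀ i : Fin d, ‖z (Sum.inr i)‖ = ‖z' (Sum.inr i)‖) → (z ∈ S ↔ z' ∈ S))
    (hz : z ∈ canonicalPoints S) : z ∈ S := by
  obtain ⟨⟨y, hyS, hy⟩, -⟩ := hz
  exact (hinv _ z (by simp) fun j => hy j j.isLt).mp hyS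

theorem exists_canonical_prefix [DecidableEq α] {x : α → ℚ_[p]}
    (hx : ∃ y, Sum.elim x y ∈ S) {n : ℕ} (hn : n ≤ d) :
    ∃ z, z ∘ Sum.inl = x ∧ z ∈ prefixExtendable S n ∧
      ∀ j : Fin d, (j : ℕ) < n → IsCanonicalNorm (coordFiber S j z) (z (Sum.inr j)) := by
  induction n with
  | zero =>
    obtain ⟨y, hy⟩ := hx
    exact ⟨Sum.elim x y, by simp, ⟨y, by simpa using hy, by simp⟩, by simp⟩
  | succ n ih =>
    obtain ⟨z, hzx, hzW, hzcan⟩ := ih (by omega)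
    obtain ⟨i, rfl⟩ : ∃ i : Fin d, (i : ℕ) = n := ⟨⟨n, by omega⟩, rfl⟩
    obtain ⟨y, hyS, hy⟩ := hzW
    have hyi : y i ∈ coordFiber S i z := by
      refine ⟨y, by simpa [Function.update_comp_eq_of_forall_ne] using hyS, fun j hj => ?_⟩
      rcases eq_or_ne j i with rfl | hji
      · simp
      · simpa [hji] using hy j (by have := Fin.val_injective.ne hji; omega)
    obtain ⟨w, hw, hwcan⟩ := exists_isCanonicalNorm ⟨_, hyi⟩
    set z' := Function.update z (Sum.inr i) w
    have hz'l : z' ∘ Sum.inl = z ∘ Sum.inl := by simp [z', Function.update_comp_eq_of_forall_ne]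
    have hfiber (j : Fin d) (hj : j ≤ i) : coordFiber S j z' = coordFiber S j z :=
      coordFiber_congr hz'l fun j' hj' => by simp [z', (hj'.trans_le hj).ne]
    refine ⟨z', hz'l.trans hzx, hw, fun j hj => ?_⟩
    rw [hfiber j (Fin.le_iff_val_le_val.mpr (by omega))]
    rcases eq_or_ne j i with rfl | hji
    · simpa [z'] using hwcan
    · simpa [z', hji] using hzcan j (by have := Fin.val_injective.ne hji; omega)

theorem exists_mem_canonicalPoints [DecidableEq α] {x : α → ℚ_[p]}
    (hx : ∃ y, Sum.elim x y ∈ S) : ∃ z ∈ canonicalPoints S, z ∘ Sum.inl = x := by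
  obtain ⟨z, hzx, hzW, hzcan⟩ := exists_canonical_prefix hx le_rfl
  exact ⟨z, ⟨hzW, fun j => hzcan j j.isLt⟩, hzx⟩

variable {L : Language} [L.Structure ℚ_[p] ]

theorem ldef_prefixExtendable (φ : Language.ring →ᴸ L) [φ.IsExpansionOn ℚ_[p] ]
    (hS : LDef p L S) (i : ℕ) : LDef p L (prefixExtendable S i) := by
  refine ldef_exists_of_finite (ldef_and ?_ (ldef_iInter_of_finite fun j =>
    ldef_imp (ldef_const _) (ldef_norm_eq φ _ _)))
  simpa only [Sum.comp_elim, Function.comp_assoc] using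
    ldef_comp (P := (· ∈ S)) (Sum.elim (Sum.inl ∘ Sum.inl) Sum.inr) hS

theorem ldef_canonicalPoints [DecidableEq α] (φ : Language.ring →ᴸ L)
    [φ.IsExpansionOn ℚ_[p] ] (hS : LDef p L S) : LDef p L (canonicalPoints S) :=
  ldef_and (ldef_prefixExtendable φ hS d) <| ldef_iInter_of_finite fun i =>
    ldef_isCanonicalNorm_fiber φ (ldef_prefixExtendable φ hS (i + 1)) (Sum.inr i)

end NormSection

theorem definable_section_into_value_set
    (L : Language) [L.Structure ℚ_[p] ]
    (φ : Language.ring →ᴸ L) [φ.IsExpansionOn ℚ_[p] ]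
    (m d : ℕ)
    (S : Set (Fin m ⊕ Fin d → ℚ_[p])) (hS : LDef p L S)
    (hinv : ∀ z z' : Fin m ⊕ Fin d → ℚ_[p], z ∘ Sum.inl = z' ∘ Sum.inl →
      (∀ i : Fin d, ‖z (Sum.inr i)‖ = ‖z' (Sum.inr i)‖) → (z ∈ S ↔ z' ∈ S)) :
    ∃ σ : (Fin m → ℚ_[p]) → (Fin d → ℝ),
      LDef p L {z : Fin m ⊕ Fin d → ℚ_[p] |
        (∃ y : Fin d → ℚ_[p], Sum.elim (z ∘ Sum.inl) y ∈ S) ∧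
        ∀ i : Fin d, ‖z (Sum.inr i)‖ = σ (z ∘ Sum.inl) i} ∧
      ∀ x : Fin m → ℚ_[p], (∃ y : Fin d → ℚ_[p], Sum.elim x y ∈ S) →
        ∃ y : Fin d → ℚ_[p], (∀ i, ‖y i‖ = σ x i) ∧ Sum.elim x y ∈ S := by
  have hlift (x : Fin m → ℚ_[p]) :
      ∃ z, (∃ y, Sum.elim x y ∈ S) → z ∈ canonicalPoints S ∧ z ∘ Sum.inl = x := by
    by_cases hx : ∃ y, Sum.elim x y ∈ S
    · obtain ⟨z, hz, hzx⟩ := exists_mem_canonicalPoints hx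
      exact ⟨z, fun _ => ⟨hz, hzx⟩⟩
    · exact ⟨0, fun h => absurd h hx⟩
  choose Z hZ using hlift
  have hgraph : {z : Fin m ⊕ Fin d → ℚ_[p] | (∃ y, Sum.elim (z ∘ Sum.inl) y ∈ S) ∧
      ∀ i, ‖z (Sum.inr i)‖ = ‖Z (z ∘ Sum.inl) (Sum.inr i)‖} = canonicalPoints S := by
    ext z
    refine ⟨fun ⟨hx, hnorm⟩ => ?_, fun hz => ?_⟩
    · exact (mem_canonicalPoints_congr (hZ _ hx).2 fun i => (hnorm i).symm).mp (hZ _ hx).1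
    · have hx : ∃ y, Sum.elim (z ∘ Sum.inl) y ∈ S :=
        ⟨z ∘ Sum.inr, by simpa using mem_of_mem_canonicalPoints hinv hz⟩
      exact ⟨hx, norm_eq_of_mem_canonicalPoints hz (hZ _ hx).1 (hZ _ hx).2.symm⟩
  refine ⟨fun x i => ‖Z x (Sum.inr i)‖, hgraph ▸ ldef_canonicalPoints φ hS,
    fun x hx => ⟨Z x ∘ Sum.inr, fun i => rfl, ?_⟩⟩
  have hZS := mem_of_mem_canonicalPoints hinv (hZ x hx).1
  rwa [← Sum.elim_comp_inl_inr (Z x), (hZ x hx).2] at hZS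

end PadicMin
end
end
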